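/- arXiv:2309.00090 — 9 statements merged into one kernel-verified Lean document; each statement's English description precedes it below -/
import Mathlib

section
/- For every positive integer n, there is a unique finite sequence of 0/1 coefficients (ε(1),...,ε(t)) with ε(1)=1 and ε(k)·ε(k+1)=0 for all k < t, such that n = Σ_{k=1}^t ε(k)·F_{t-k+1}, where F is the shifted Fibonacci sequence with F_1=1, F_2=2, F_{n+2}=F_{n+1}+F_n (Zeckendorf's theorem). -/
/-!
With `F j = fib (j + 1)`, the digit `ε k` contributes `fib (t + 2 - k)`, so reading the digits
backwards turns a representation into the set of Fibonacci indices
`{j ∈ [2, t + 1] | ε (t + 2 - j) = 1}`. The conditions on `ε` say exactly that this is a set of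
pairwise non-adjacent indices `≥ 2` with maximum `t + 1`, and such a set, sorted decreasingly, is a
Zeckendorf representation in the sense of `List.IsZeckendorfRep`. Existence and uniqueness then
come from Mathlib's Zeckendorf theorem (`Nat.zeckendorf`, `Nat.zeckendorf_sum_fib`).
-/

open Finset Nat

def IsZeckendorfSet (S : Finset ℕ) : Prop :=
  (∀ a ∈ S, 2 ≤ a) ∧ ∀ a ∈ S, a + 1 ∉ S

namespace List.IsZeckendorfRep

variable {l : List ℕ}

theorem pairwise (hl : l.IsZeckendorfRep) : (l ++ [0]).Pairwise (fun a b ↦ b + 2 ≤ a) :=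
  have : Trans (fun a b : ℕ ↦ b + 2 ≤ a) (fun a b ↦ b + 2 ≤ a) (fun a b ↦ b + 2 ≤ a) :=
    ⟨fun hab hbc ↦ by omega⟩
  List.IsChain.pairwise hl

theorem nodup (hl : l.IsZeckendorfRep) : l.Nodup :=
  (List.pairwise_append.1 hl.pairwise).1.imp fun h ↦ by omega

theorem isZeckendorfSet_toFinset (hl : l.IsZeckendorfRep) : IsZeckendorfSet l.toFinset := by
  obtain ⟨hpw, -, hzero⟩ := List.pairwise_append.1 hl.pairwise
  refine ⟨fun a ha ↦ hzero a (List.mem_toFinset.1 ha) 0 (List.mem_singleton_self 0),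
    fun a ha ha' ↦ ?_⟩
  have : Std.Symm fun a b : ℕ ↦ b + 2 ≤ a ∨ a + 2 ≤ b := ⟨fun _ _ ↦ Or.symm⟩
  have := (hpw.imp (S := fun a b ↦ b + 2 ≤ a ∨ a + 2 ≤ b) Or.inl).forall
    (List.mem_toFinset.1 ha) (List.mem_toFinset.1 ha') (by omega)
  omega

end List.IsZeckendorfRep

theorem Nat.sum_fib_zeckendorf_toFinset (n : ℕ) : ∑ j ∈ n.zeckendorf.toFinset, fib j = n := by
  rw [List.sum_toFinset _ (isZeckendorfRep_zeckendorf n).nodup, sum_zeckendorf_fib]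

namespace IsZeckendorfSet

variable {S T : Finset ℕ}

theorem isZeckendorfRep_sort (hS : IsZeckendorfSet S) : (S.sort (· ≥ ·)).IsZeckendorfRep := by
  refine List.Pairwise.isChain (List.pairwise_append.2 ⟨?_, List.pairwise_singleton _ _, ?_⟩)
  · refine S.sortedGT_sort.pairwise.imp_of_mem fun {a b} ha hb hab ↦ ?_
    have : b + 1 ≠ a := fun h ↦ hS.2 b (by simpa using hb) (h ▸ by simpa using ha)
    omega
  · simpa using hS.1

theorem eq_of_sum_fib_eq (hS : IsZeckendorfSet S) (hT : IsZeckendorfSet T)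
    (h : ∑ j ∈ S, fib j = ∑ j ∈ T, fib j) : S = T := by
  have hsort : S.sort (· ≥ ·) = T.sort (· ≥ ·) := by
    rw [← zeckendorf_sum_fib hS.isZeckendorfRep_sort, ← zeckendorf_sum_fib hT.isZeckendorfRep_sort,
      ← List.sum_toFinset _ (S.sort_nodup _), ← List.sum_toFinset _ (T.sort_nodup _),
      sort_toFinset, sort_toFinset, h]
  rw [← S.sort_toFinset (· ≥ ·), hsort, sort_toFinset]

end IsZeckendorfSet

theorem eq_fib_add_one_of_rec {F : ℕ → ℕ} (hF1 : F 1 = 1) (hF2 : F 2 = 2)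
    (hFrec : ∀ n, 1 ≤ n → F (n + 2) = F (n + 1) + F n) :
    ∀ j, 1 ≤ j → F j = fib (j + 1) := by
  have hpair : ∀ j, F (j + 1) = fib (j + 2) ∧ F (j + 2) = fib (j + 3) := by
    intro j
    induction j with
    | zero => exact ⟨hF1, hF2⟩
    | succ j ih =>
      refine ⟨ih.2, ?_⟩
      rw [hFrec (j + 1) (by omega), ih.1, ih.2, add_comm]
      exact (fib_add_two (n := j + 2)).symm
  intro j hj
  obtain ⟨i, rfl⟩ := Nat.exists_eq_add_of_le' hj
  exact (hpair i).1

def digitSet (t : ℕ) (ε : ℕ → ℕ) : Finset ℕ :=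
  (Icc 2 (t + 1)).filter fun j ↦ ε (t + 2 - j) = 1

section digitSet

variable {t : ℕ} {ε : ℕ → ℕ}

theorem mem_digitSet {j : ℕ} : j ∈ digitSet t ε ↔ (2 ≤ j ∧ j ≤ t + 1) ∧ ε (t + 2 - j) = 1 := by
  rw [digitSet, mem_filter, mem_Icc]

theorem sub_mem_digitSet_iff {k : ℕ} (hk1 : 1 ≤ k) (hkt : k ≤ t) :
    t + 2 - k ∈ digitSet t ε ↔ ε k = 1 := by
  rw [mem_digitSet, show t + 2 - (t + 2 - k) = k by omega]
  exact and_iff_right (by omega)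

theorem sum_mul_eq_sum_fib_digitSet {F : ℕ → ℕ} (hF : ∀ j, 1 ≤ j → F j = fib (j + 1))
    (t : ℕ) {ε : ℕ → ℕ} (hε : ∀ k, ε k ≤ 1) :
    ∑ k ∈ Icc 1 t, ε k * F (t - k + 1) = ∑ j ∈ digitSet t ε, fib j := by
  rw [digitSet, sum_filter]
  refine sum_nbij' (t + 2 - ·) (t + 2 - ·) ?_ ?_ ?_ ?_ fun k hk ↦ ?_
  any_goals intro k hk; simp only [mem_Icc] at hk ⊢; omega
  rw [mem_Icc] at hk
  rw [show t + 2 - (t + 2 - k) = k by omega, show t + 2 - k = t - k + 1 + 1 by omega,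
    hF _ (by omega)]
  rcases Nat.le_one_iff_eq_zero_or_eq_one.1 (hε k) with h | h <;> simp [h]

end digitSet

structure IsZeckendorfDigits (t : ℕ) (ε : ℕ → ℕ) : Prop where
  one_le : 1 ≤ t
  head : ε 1 = 1
  le_one : ∀ k, ε k ≤ 1
  mul_succ_eq_zero : ∀ k, 1 ≤ k → k < t → ε k * ε (k + 1) = 0
  eq_zero : ∀ k, k = 0 ∨ t < k → ε k = 0

namespace IsZeckendorfDigits

variable {t t' : ℕ} {ε ε' : ℕ → ℕ}

theorem isZeckendorfSet_digitSet (h : IsZeckendorfDigits t ε) :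
    IsZeckendorfSet (digitSet t ε) := by
  refine ⟨fun j hj ↦ (mem_digitSet.1 hj).1.1, fun j hj hj1 ↦ ?_⟩
  rw [mem_digitSet] at hj hj1
  have hk : ε (t + 1 - j) = 1 := by rw [show t + 1 - j = t + 2 - (j + 1) by omega]; exact hj1.2
  have hk1 : ε (t + 1 - j + 1) = 1 := by rw [show t + 1 - j + 1 = t + 2 - j by omega]; exact hj.2
  simpa [hk, hk1] using h.mul_succ_eq_zero (t + 1 - j) (by omega) (by omega)

theorem succ_mem_digitSet (h : IsZeckendorfDigits t ε) : t + 1 ∈ digitSet t ε :=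
  (sub_mem_digitSet_iff le_rfl h.one_le).2 h.head

theorem le_of_digitSet_eq (h : IsZeckendorfDigits t ε) (hD : digitSet t ε = digitSet t' ε') :
    t ≤ t' := by
  have := mem_digitSet.1 (hD ▸ h.succ_mem_digitSet)
  omega

theorem eq_of_digitSet_eq (h : IsZeckendorfDigits t ε) (h' : IsZeckendorfDigits t' ε')
    (hD : digitSet t ε = digitSet t' ε') : t = t' ∧ ε = ε' := by
  obtain rfl : t = t' := (h.le_of_digitSet_eq hD).antisymm (h'.le_of_digitSet_eq hD.symm)
  refine ⟨rfl, funext fun k ↦ ?_⟩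
  by_cases hk : 1 ≤ k ∧ k ≤ t
  · have := (sub_mem_digitSet_iff hk.1 hk.2).symm.trans
      (hD ▸ sub_mem_digitSet_iff (ε := ε') hk.1 hk.2)
    have := h.le_one k
    have := h'.le_one k
    omega
  · rw [h.eq_zero k (by omega), h'.eq_zero k (by omega)]

end IsZeckendorfDigits

def digitsOfSet (t : ℕ) (S : Finset ℕ) (k : ℕ) : ℕ :=
  if t + 2 - k ∈ S then 1 else 0

theorem digitSet_digitsOfSet {t : ℕ} {S : Finset ℕ} (hS : ∀ j ∈ S, 2 ≤ j ∧ j ≤ t + 1) :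
    digitSet t (digitsOfSet t S) = S := by
  ext j
  rw [mem_digitSet, digitsOfSet]
  constructor
  · rintro ⟨hj, hmem⟩
    rw [show t + 2 - (t + 2 - j) = j by omega] at hmem
    simpa using hmem
  · intro hj
    have := hS j hj
    refine ⟨by omega, ?_⟩
    rw [show t + 2 - (t + 2 - j) = j by omega, if_pos hj]

theorem IsZeckendorfSet.exists_digits {S : Finset ℕ} (hS : IsZeckendorfSet S) (hne : S.Nonempty) :
    ∃ t ε, IsZeckendorfDigits t ε ∧ digitSet t ε = S := by
  set t := S.max' hne - 1
  have hmax : S.max' hne = t + 1 := by have := hS.1 _ (S.max'_mem hne); omega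
  have hbound : ∀ j ∈ S, 2 ≤ j ∧ j ≤ t + 1 := fun j hj ↦ ⟨hS.1 j hj, hmax ▸ S.le_max' j hj⟩
  refine ⟨t, digitsOfSet t S, ⟨?_, ?_, ?_, ?_, ?_⟩, digitSet_digitsOfSet hbound⟩
  · have := hS.1 _ (S.max'_mem hne)
    omega
  · simpa [digitsOfSet, ← hmax] using S.max'_mem hne
  · intro k
    unfold digitsOfSet
    split_ifs <;> simp
  · intro k hk1 hkt
    by_cases hk : t + 2 - k ∈ S
    · have : t + 2 - (k + 1) ∉ S := fun h ↦
        hS.2 _ h (by rwa [show t + 2 - (k + 1) + 1 = t + 2 - k by omega])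
      simp only [digitsOfSet, if_neg this, mul_zero]
    · simp only [digitsOfSet, if_neg hk, zero_mul]
  · intro k hk
    have : t + 2 - k ∉ S := fun hmem ↦ by
      have := hbound _ hmem
      omega
    exact if_neg this

/-- Zeckendorf's theorem: every positive integer has a unique representation
`n = Σ_{k=1}^t ε(k) F_{t-k+1}` with 0/1 coefficients, `ε 1 = 1`, and no two
consecutive nonzero coefficients, where `F` is the shifted Fibonacci sequence. -/
theorem zeckendorf_theorem
    (F : ℕ → ℕ) (hF1 : F 1 = 1) (hF2 : F 2 = 2)
    (hFrec : ∀ n : ℕ, 1 ≤ n → F (n + 2) = F (n + 1) + F n)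
    (n : ℕ) (hn : 1 ≤ n) :
    ∃! εt : ℕ × (ℕ → ℕ),
      1 ≤ εt.1 ∧
      εt.2 1 = 1 ∧
      (∀ k, εt.2 k ≤ 1) ∧
      (∀ k, 1 ≤ k → k < εt.1 → εt.2 k * εt.2 (k + 1) = 0) ∧
      (∀ k, k = 0 ∨ εt.1 < k → εt.2 k = 0) ∧
      n = ∑ k ∈ Finset.Icc 1 εt.1, εt.2 k * F (εt.1 - k + 1) := by
  have hsum := sum_mul_eq_sum_fib_digitSet (eq_fib_add_one_of_rec hF1 hF2 hFrec)
  have hS := (isZeckendorfRep_zeckendorf n).isZeckendorfSet_toFinset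
  obtain ⟨t, ε, hε, hD⟩ := hS.exists_digits (by rw [zeckendorf_of_pos hn]; simp)
  have hεn : ∑ j ∈ digitSet t ε, fib j = n := by rw [hD, sum_fib_zeckendorf_toFinset]
  refine ⟨(t, ε), ⟨hε.one_le, hε.head, hε.le_one, hε.mul_succ_eq_zero, hε.eq_zero,
    by rw [hsum _ hε.le_one, hεn]⟩, ?_⟩
  rintro ⟨t', ε'⟩ ⟨h1, h2, h3, h4, h5, hn'⟩
  have hε' : IsZeckendorfDigits t' ε' := ⟨h1, h2, h3, h4, h5⟩
  have hD' : digitSet t' ε' = digitSet t ε := by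
    refine hε'.isZeckendorfSet_digitSet.eq_of_sum_fib_eq hε.isZeckendorfSet_digitSet ?_
    rw [← hsum _ hε'.le_one, hεn]
    exact hn'.symm
  obtain ⟨rfl, rfl⟩ := hε'.eq_of_digitSet_eq hε hD'
  rfl
end

section
/- The function 𝔉(x) = (φ/√5)·(φ^x + φ^{-x}·cos(πx)·φ^{-2}) is strictly increasing on [1, ∞). -/
/-!
With `L = log φ`, the derivative of `φ ^ x + φ ^ (-x) * cos (π x) * φ ^ (-2)` is
`φ ^ (-x - 2) * (L * φ ^ (2x + 2) - (L * cos (π x) + π * sin (π x)))`.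
For `1 < x ≤ 2` the sine is nonpositive, so the bracket exceeds `L * (φ ^ (2x + 2) - 1) > 0`.
For `x ≥ 2` the bracket is at least `L * (φ ^ 6 - 1) - π`, and `L ≥ 1 - φ⁻¹ = 2 - φ` together with
`φ ^ 6 = 8φ + 5` bounds this below by `4φ - π > 0`.
-/

open Real

theorem hasDerivAt_rpow_add_rpow_neg_mul_cos_pi_mul {a : ℝ} (ha : 0 < a) (x : ℝ) :
    HasDerivAt (fun x => a ^ x + a ^ (-x) * cos (π * x) * a ^ (-2 : ℝ))
      (a ^ (-x) * a ^ (-2 : ℝ) *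
        (log a * a ^ (2 * x + 2) - (log a * cos (π * x) + π * sin (π * x)))) x := by
  have hpow : HasDerivAt (fun x => a ^ x) (log a * 1 * a ^ x) x :=
    (hasDerivAt_id x).const_rpow ha
  have hpow_neg : HasDerivAt (fun x => a ^ (-x)) (log a * (-1) * a ^ (-x)) x :=
    (hasDerivAt_neg x).const_rpow ha
  have hcos : HasDerivAt (fun x => cos (π * x)) (-sin (π * x) * π) x := by
    simpa using ((hasDerivAt_id x).const_mul π).cos
  refine (hpow.add ((hpow_neg.mul hcos).mul_const (a ^ (-2 : ℝ)))).congr_deriv ?_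
  have hsplit : a ^ x = a ^ (-x) * a ^ (-2 : ℝ) * a ^ (2 * x + 2) := by
    rw [← rpow_add ha, ← rpow_add ha]; ring_nf
  rw [hsplit]; ring

theorem sin_pi_mul_nonpos_of_mem_Icc {x : ℝ} (hx : x ∈ Set.Icc 1 2) : sin (π * x) ≤ 0 := by
  have h : sin (π * x) = -sin (π * (x - 1)) := by
    rw [mul_sub, mul_one, sin_sub_pi, neg_neg]
  rw [h, neg_nonpos]
  exact sin_nonneg_of_nonneg_of_le_pi (by nlinarith [pi_pos, hx.1]) (by nlinarith [pi_pos, hx.2])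

section

open scoped goldenRatio

theorem two_sub_goldenRatio_le_log_goldenRatio : 2 - φ ≤ log φ := by
  have h := one_sub_inv_le_log_of_pos goldenRatio_pos
  rw [inv_goldenRatio, ← one_sub_goldenConj] at h
  linarith

theorem goldenRatio_pow_six : φ ^ 6 = 8 * φ + 5 := by
  linear_combination (φ ^ 4 + φ ^ 3 + 2 * φ ^ 2 + 3 * φ + 5) * goldenRatio_sq

theorem log_goldenRatio_mul_cos_add_pi_mul_sin_lt {x : ℝ} (hx : 1 < x) :
    log φ * cos (π * x) + π * sin (π * x) < log φ * φ ^ (2 * x + 2) := by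
  have hlog : 0 < log φ := log_pos one_lt_goldenRatio
  rcases le_or_gt x 2 with hx2 | hx2
  · have hsin := sin_pi_mul_nonpos_of_mem_Icc ⟨hx.le, hx2⟩
    calc log φ * cos (π * x) + π * sin (π * x) ≤ log φ := by
          nlinarith [cos_le_one (π * x), pi_pos]
      _ < log φ * φ ^ (2 * x + 2) :=
          lt_mul_of_one_lt_right hlog (one_lt_rpow one_lt_goldenRatio (by linarith))
  · have hpow : φ ^ 6 ≤ φ ^ (2 * x + 2) := by
      rw [← rpow_natCast]
      exact rpow_le_rpow_of_exponent_le one_lt_goldenRatio.le (by push_cast; linarith)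
    calc log φ * cos (π * x) + π * sin (π * x) ≤ log φ + π := by
          nlinarith [cos_le_one (π * x), sin_le_one (π * x), pi_pos]
      _ < log φ * φ ^ 6 := by
          rw [goldenRatio_pow_six]
          nlinarith [two_sub_goldenRatio_le_log_goldenRatio, goldenRatio_sq, one_lt_goldenRatio,
            pi_lt_four]
      _ ≤ log φ * φ ^ (2 * x + 2) := mul_le_mul_of_nonneg_left hpow hlog.le

theorem strictMonoOn_goldenRatio_rpow_add_rpow_neg_mul_cos_pi_mul :
    StrictMonoOn (fun x => φ ^ x + φ ^ (-x) * cos (π * x) * φ ^ (-2 : ℝ)) (Set.Ici 1) := by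
  have hderiv := hasDerivAt_rpow_add_rpow_neg_mul_cos_pi_mul goldenRatio_pos
  refine strictMonoOn_of_hasDerivWithinAt_pos (convex_Ici 1)
    (HasDerivAt.continuousOn fun x _ => hderiv x) (fun x _ => (hderiv x).hasDerivWithinAt) ?_
  intro x hx
  rw [interior_Ici] at hx
  exact mul_pos (by positivity) (sub_pos.2 (log_goldenRatio_mul_cos_add_pi_mul_sin_lt hx))

end

/-- The Benford continuation `𝔉(x) = (φ/√5)(φ^x + φ^{-x} cos(πx) φ^{-2})`
is strictly increasing on `[1, ∞)`. -/
theorem benford_continuation_strictMonoOn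
    (φ : ℝ) (hφ : φ = (1 + Real.sqrt 5) / 2)
    (𝔉 : ℝ → ℝ)
    (h𝔉 : ∀ x : ℝ, 𝔉 x = (φ / Real.sqrt 5) *
      (φ ^ x + φ ^ (-x) * Real.cos (Real.pi * x) * φ ^ (-2 : ℝ))) :
    StrictMonoOn 𝔉 (Set.Ici (1 : ℝ)) := by
  obtain rfl : φ = goldenRatio := hφ
  have hc : 0 < goldenRatio / √5 := by positivity
  intro x hx y hy hxy
  rw [h𝔉, h𝔉]
  exact mul_lt_mul_of_pos_left
    (strictMonoOn_goldenRatio_rpow_add_rpow_neg_mul_cos_pi_mul hx hy hxy) hc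
end

section
/- Let 𝔉(x) = (φ/√5)·(φ^x + φ^{-x}·cos(πx)·φ^{-2}) on [1,∞), and let 𝔉^{-1} denote its inverse. Then 𝔉^{-1}(y) = log_φ(y) - log_φ(φ/√5) + O(1/y^2) as y → ∞; more precisely there is a constant C such that |𝔉^{-1}(y) - log_φ(y) + log_φ(φ/√5)| ≤ C/y^2 for all sufficiently large y. -/
open Real

/-- Asymptotics of the inverse of the Benford continuation:
if `𝔉 x = y` with `x ≥ 1`, then `x = log_φ y - log_φ(φ/√5) + O(1/y²)`. -/
theorem benford_continuation_inverse_asymptotics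
    (φ : ℝ) (hφ : φ = (1 + Real.sqrt 5) / 2)
    (𝔉 : ℝ → ℝ)
    (h𝔉 : ∀ x : ℝ, 𝔉 x = (φ / Real.sqrt 5) *
      (φ ^ x + φ ^ (-x) * Real.cos (Real.pi * x) * φ ^ (-2 : ℝ))) :
    ∃ C Y : ℝ, ∀ y : ℝ, Y ≤ y → ∀ x : ℝ, 1 ≤ x → 𝔉 x = y →
      |x - (Real.log y / Real.log φ - Real.log (φ / Real.sqrt 5) / Real.log φ)|
        ≤ C / y ^ 2 := by
  have hs2 : (2:ℝ) < Real.sqrt 5 := by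
    have h4 : Real.sqrt 4 < Real.sqrt 5 := Real.sqrt_lt_sqrt (by norm_num) (by norm_num)
    have : Real.sqrt 4 = 2 := by
      rw [show (4:ℝ) = 2^2 by norm_num, Real.sqrt_sq (by norm_num : (0:ℝ) ≤ 2)]
    linarith
  have hs3 : Real.sqrt 5 < 3 := by
    have h9 : Real.sqrt 5 < Real.sqrt 9 := Real.sqrt_lt_sqrt (by norm_num) (by norm_num)
    have : Real.sqrt 9 = 3 := by
      rw [show (9:ℝ) = 3^2 by norm_num, Real.sqrt_sq (by norm_num : (0:ℝ) ≤ 3)]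
    linarith
  have hφ1 : 1 < φ := by rw [hφ]; linarith
  have hφ0 : 0 < φ := by linarith
  have hlogφ : 0 < Real.log φ := Real.log_pos hφ1
  set c := φ / Real.sqrt 5 with hc
  have hc0 : 0 < c := div_pos hφ0 (by linarith)
  have hc1 : c < 1 := by
    rw [hc, div_lt_one (by linarith), hφ]; linarith
  refine ⟨4 * c ^ 2 / Real.log φ, 10, ?_⟩
  intro y hy x hx hxy
  have hy0 : (0:ℝ) < y := by linarith
  set E := φ ^ (-x) * Real.cos (Real.pi * x) * φ ^ (-2:ℝ) with hEdef
  have hpx0 : (0:ℝ) < φ ^ x := Real.rpow_pos_of_pos hφ0 x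
  have hEx : |E| ≤ φ ^ (-x) := by
    have h1 : |Real.cos (Real.pi * x)| ≤ 1 := Real.abs_cos_le_one _
    have h2 : φ ^ (-2:ℝ) ≤ 1 :=
      Real.rpow_le_one_of_one_le_of_nonpos hφ1.le (by norm_num)
    have h2' : (0:ℝ) < φ ^ (-2:ℝ) := Real.rpow_pos_of_pos hφ0 _
    have h3 : (0:ℝ) < φ ^ (-x) := Real.rpow_pos_of_pos hφ0 _
    rw [hEdef, abs_mul, abs_mul, abs_of_pos h3, abs_of_pos h2']
    calc φ ^ (-x) * |Real.cos (Real.pi * x)| * φ ^ (-2:ℝ)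
        ≤ φ ^ (-x) * 1 * 1 := by
          apply mul_le_mul (mul_le_mul_of_nonneg_left h1 h3.le) h2 h2'.le
          positivity
      _ = φ ^ (-x) := by ring
  have hE1 : |E| ≤ 1 :=
    hEx.trans (Real.rpow_le_one_of_one_le_of_nonpos hφ1.le (by linarith))
  -- the key equation
  have heq : φ ^ x = y / c - E := by
    have h := (h𝔉 x).symm.trans hxy
    have h2 : φ ^ x + E = y / c := by
      rw [eq_div_iff (ne_of_gt hc0)]
      rw [← hEdef] at h
      linarith [h]
    linarith
  -- lower bound on φ^x
  have h1le : (1:ℝ) ≤ y / (2 * c) := by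
    rw [le_div_iff₀ (by positivity)]; nlinarith
  have hge : y / (2 * c) ≤ φ ^ x := by
    have hsplit : y / c = y / (2*c) + y / (2*c) := by field_simp; ring
    have := (abs_le.mp hE1).2
    rw [heq]; linarith
  -- bound |E| ≤ 2c/y
  have hEy : |E| ≤ 2 * c / y := by
    have h1 : φ ^ (-x) = (φ ^ x)⁻¹ := Real.rpow_neg hφ0.le x
    have h2 : (φ ^ x)⁻¹ ≤ (y / (2*c))⁻¹ :=
      inv_anti₀ (by linarith) hge
    have h3 : (y / (2*c))⁻¹ = 2 * c / y := by field_simp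
    calc |E| ≤ φ ^ (-x) := hEx
      _ ≤ 2 * c / y := by rw [h1]; rw [h3] at h2; exact h2
  -- set a := c * φ^x / y
  set a : ℝ := c * (φ ^ x) / y with ha
  have ha_eq : a = 1 - c * E / y := by
    rw [ha, heq]; field_simp
  have htbound : |c * E / y| ≤ 2 * c ^ 2 / y ^ 2 := by
    rw [abs_div, abs_mul, abs_of_pos hc0, abs_of_pos hy0]
    rw [div_le_div_iff₀ hy0 (by positivity)]
    have : c * |E| ≤ c * (2 * c / y) := mul_le_mul_of_nonneg_left hEy hc0.le
    have h4 : c * (2 * c / y) * y ^ 2 = 2 * c ^ 2 * y := by field_simp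
    nlinarith
  have hty : 2 * c ^ 2 / y ^ 2 ≤ 1 / 2 := by
    rw [div_le_div_iff₀ (by positivity) (by norm_num)]
    nlinarith
  have ha_ge : (1:ℝ)/2 ≤ a := by
    have := (abs_le.mp htbound).2
    rw [ha_eq]; linarith
  have ha0 : (0:ℝ) < a := by linarith
  -- |log a| ≤ 2 * |a - 1|
  have hloga : |Real.log a| ≤ 2 * |a - 1| := by
    rw [abs_le]
    constructor
    · have h1 : Real.log a⁻¹ ≤ a⁻¹ - 1 := Real.log_le_sub_one_of_pos (by positivity)
      rw [Real.log_inv] at h1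
      have h2 : a⁻¹ - 1 = (1 - a) / a := by field_simp
      have h3 : (1 - a)/a ≤ 2 * |a - 1| := by
        rcases le_or_gt a 1 with h | h
        · have : (1 - a)/a ≤ (1-a)/(1/2) :=
            div_le_div_of_nonneg_left (by linarith) (by norm_num) ha_ge
          have habs : |a - 1| = 1 - a := by rw [abs_of_nonpos (by linarith)]; ring
          rw [habs]; linarith [this]
        · have h0 : (1 - a)/a ≤ 0 := div_nonpos_of_nonpos_of_nonneg (by linarith) ha0.le
          have h5 : (0:ℝ) ≤ 2 * |a - 1| := by positivity
          linarith
      rw [h2] at h1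
      linarith [h1, h3]
    · have h1 : Real.log a ≤ a - 1 := Real.log_le_sub_one_of_pos ha0
      have : a - 1 ≤ |a - 1| := le_abs_self _
      linarith [abs_nonneg (a-1)]
  -- rewrite the target
  have hxlog : x * Real.log φ = Real.log (φ ^ x) := (Real.log_rpow hφ0 x).symm
  have htarget : x - (Real.log y / Real.log φ - Real.log c / Real.log φ)
      = Real.log a / Real.log φ := by
    rw [ha, Real.log_div (by positivity) (ne_of_gt hy0),
        Real.log_mul (ne_of_gt hc0) (ne_of_gt hpx0), ← hxlog]
    field_simp
    ring
  rw [htarget, abs_div, abs_of_pos hlogφ, div_le_div_iff₀ hlogφ (by positivity)]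
  have hfin : |Real.log a| ≤ 4 * c ^ 2 / y ^ 2 := by
    have h1 : |a - 1| = |c * E / y| := by rw [ha_eq]; rw [abs_sub_comm]; ring_nf
    calc |Real.log a| ≤ 2 * |a - 1| := hloga
      _ ≤ 2 * (2 * c ^ 2 / y ^ 2) := by rw [h1]; linarith [htbound]
      _ = 4 * c ^ 2 / y ^ 2 := by ring
  calc |Real.log a| * y ^ 2 ≤ (4 * c ^ 2 / y ^ 2) * y ^ 2 := by
        exact mul_le_mul_of_nonneg_right hfin (by positivity)
    _ = 4 * c ^ 2 := by field_simp
    _ = 4 * c ^ 2 / Real.log φ * Real.log φ := by field_simp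
end

section
/- For every integer a > 1, log_φ(a) is irrational, where φ is the golden ratio. -/
/-!
If `log a / log φ = p / q` then `a ^ q = φ ^ p`, so some nonzero power of `φ` would be rational.
But `φ ^ (n + 1) = F (n + 1) φ + F n` with Fibonacci numbers `F (n + 1) ≠ 0`, and `φ` is irrational.
-/

open Real

theorem Real.goldenRatio_pow_irrational {n : ℕ} (hn : n ≠ 0) : Irrational (goldenRatio ^ n) := by
  obtain ⟨m, rfl⟩ := Nat.exists_eq_succ_of_ne_zero hn
  rw [← goldenRatio_mul_fib_succ_add_fib, mul_comm]
  exact (goldenRatio_irrational.natCast_mul (Nat.fib_pos.mpr m.succ_pos).ne').add_natCast _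

theorem Irrational.zpow_of_forall_pow {x : ℝ} (h : ∀ n : ℕ, n ≠ 0 → Irrational (x ^ n))
    {m : ℤ} (hm : m ≠ 0) : Irrational (x ^ m) := by
  rcases m with n | n
  · rw [Int.ofNat_eq_natCast, zpow_natCast]
    exact h n (by simpa using hm)
  · rw [zpow_negSucc]
    exact (h _ n.succ_ne_zero).inv

theorem irrational_log_div_log_of_forall_pow {x : ℝ} (hx : 0 < x)
    (h : ∀ n : ℕ, n ≠ 0 → Irrational (x ^ n)) {a : ℚ} (ha : 0 < a) (ha1 : a ≠ 1) :
    Irrational (log a / log x) := by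
  have hx1 : x ≠ 1 := fun hx1 => h 1 one_ne_zero ⟨1, by simp [hx1]⟩
  have hlogx : log x ≠ 0 := log_ne_zero_of_pos_of_ne_one hx hx1
  have ha' : (0 : ℝ) < a := Rat.cast_pos.mpr ha
  have hloga : log a ≠ 0 := log_ne_zero_of_pos_of_ne_one ha' (by exact_mod_cast ha1)
  rintro ⟨r, hr⟩
  have hden : (r.den : ℝ) ≠ 0 := Nat.cast_ne_zero.mpr r.den_nz
  have hcross : (r.num : ℝ) * log x = r.den * log a := by
    rw [Rat.cast_def, div_eq_div_iff hden hlogx] at hr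
    linarith
  have hnum : r.num ≠ 0 := by
    rintro h0
    simp only [h0, Int.cast_zero, zero_mul] at hcross
    exact mul_ne_zero hden hloga hcross.symm
  have hpow : (a : ℝ) ^ (r.den : ℤ) = x ^ r.num := by
    refine log_injOn_pos (zpow_pos ha' _) (zpow_pos hx _) ?_
    rw [log_zpow, log_zpow, Int.cast_natCast, hcross]
  exact Irrational.zpow_of_forall_pow h hnum ⟨a ^ (r.den : ℤ), by push_cast; exact hpow⟩

/-- For every integer `a > 1`, `log_φ a` is irrational, where `φ` is the golden ratio. -/
theorem logPhi_irrational
    (φ : ℝ) (hφ : φ = (1 + Real.sqrt 5) / 2)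
    (a : ℕ) (ha : 1 < a) :
    Irrational (Real.log a / Real.log φ) := by
  subst hφ
  exact_mod_cast irrational_log_div_log_of_forall_pow goldenRatio_pos
    (fun _ => goldenRatio_pow_irrational) (by positivity : (0 : ℚ) < a)
    (by exact_mod_cast ha.ne')
end

section
/- Let a > 1 be an integer and φ the golden ratio. Then the fractional parts of n·log_φ(a), for n = 1, 2, 3, ..., are equidistributed in [0,1]. -/
open scoped Classical

/-- A sequence of reals has equidistributed fractional parts if for every
`β ∈ [0,1]`, the natural density of `{n : {x_n} ≤ β}` equals `β`. -/
def EquidistFract (x : ℕ → ℝ) : Prop :=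
  ∀ β ∈ Set.Icc (0 : ℝ) 1,
    Filter.Tendsto
      (fun N : ℕ =>
        (((Finset.Icc 1 N).filter (fun n => Int.fract (x n) ≤ β)).card : ℝ) / N)
      Filter.atTop (nhds β)

/-!
`log_φ a` is irrational: otherwise `a ^ q = φ ^ p` for positive integers `p, q`, whereas
`φ ^ p = F_p φ + F_{p-1}` is irrational. For irrational `α` the point `α` of `ℝ/ℤ` has infinite
order, so every nontrivial character `e_k` satisfies `e_k(α) ≠ 1`; its sums along the orbit
`n • α` are then bounded geometric sums, and its averages tend to `0 = ∫ e_k`. Trigonometric polynomials form a point-separating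
star subalgebra and the circle is compact, so the empirical measures of the orbit converge weakly
to Haar measure (Weyl). The arc `[0, β]` has a two-point frontier, so by the portmanteau theorem
the proportion of `n ≤ N` with `{n α} ≤ β` tends to its length `β`.
-/

open MeasureTheory Filter Topology Finset
open scoped ENNReal

theorem irrational_goldenRatio_pow {n : ℕ} (hn : n ≠ 0) : Irrational (Real.goldenRatio ^ n) := by
  obtain ⟨m, rfl⟩ := Nat.exists_eq_succ_of_ne_zero hn
  rw [← Real.goldenRatio_mul_fib_succ_add_fib]
  exact (Real.goldenRatio_irrational.mul_natCast (Nat.fib_pos.mpr m.succ_pos).ne').add_natCast _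

theorem irrational_log_natCast_div_log {a : ℕ} (ha : 1 < a) {y : ℝ} (hy : 1 < y)
    (hpow : ∀ n : ℕ, n ≠ 0 → Irrational (y ^ n)) : Irrational (Real.log a / Real.log y) := by
  rintro ⟨q, hq⟩
  have hlogy : 0 < Real.log y := Real.log_pos hy
  have hloga : 0 < Real.log a := Real.log_pos (by exact_mod_cast ha)
  have hq_pos : 0 < q := by
    have : (0 : ℝ) < q := hq ▸ div_pos hloga hlogy
    exact_mod_cast this
  obtain ⟨p, hp⟩ : ∃ p : ℕ, q.num = p :=
    ⟨q.num.toNat, (Int.toNat_of_nonneg (Rat.num_nonneg.mpr hq_pos.le)).symm⟩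
  have hp0 : p ≠ 0 := by
    rintro rfl
    exact Rat.num_ne_zero.mpr hq_pos.ne' hp
  have hnum : (q : ℝ) * q.den = p := by exact_mod_cast hp ▸ Rat.mul_den_eq_num q
  have hpow_eq : (a : ℝ) ^ q.den = y ^ p := by
    refine Real.log_injOn_pos (Set.mem_Ioi.mpr (by positivity))
      (Set.mem_Ioi.mpr (pow_pos (by linarith) _)) ?_
    rw [Real.log_pow, Real.log_pow, ← hnum, hq]
    field_simp
  exact hpow p hp0 ⟨(a ^ q.den : ℕ), by push_cast; exact hpow_eq⟩

section EmpiricalMeasure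

variable {X : Type*} [MeasurableSpace X]

noncomputable def empiricalMeasure (x : ℕ → X) (N : ℕ) [NeZero N] : ProbabilityMeasure X :=
  ⟨(N : ℝ≥0∞)⁻¹ • ∑ n ∈ Icc 1 N, Measure.dirac (x n),
    ⟨by simp [ENNReal.inv_mul_cancel (NeZero.ne _)]⟩⟩

lemma empiricalMeasure_apply (x : ℕ → X) (N : ℕ) [NeZero N] {s : Set X} (hs : MeasurableSet s) :
    (empiricalMeasure x N : Measure X) s = (N : ℝ≥0∞)⁻¹ * #{n ∈ Icc 1 N | x n ∈ s} := by
  simp [empiricalMeasure, Measure.dirac_apply' _ hs, Set.indicator_apply]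

lemma integral_empiricalMeasure [MeasurableSingletonClass X] {E : Type*} [NormedAddCommGroup E]
    [NormedSpace ℝ E] [CompleteSpace E] (x : ℕ → X) (N : ℕ) [NeZero N] (f : X → E) :
    ∫ y, f y ∂(empiricalMeasure x N : Measure X) = (N : ℝ)⁻¹ • ∑ n ∈ Icc 1 N, f (x n) := by
  rw [empiricalMeasure, ProbabilityMeasure.coe_mk, integral_smul_measure,
    integral_finsetSum_measure fun n _ ↦ integrable_dirac enorm_lt_top]
  simp [integral_dirac]

end EmpiricalMeasure

lemma tendsto_inv_smul_sum_pow {𝕜 : Type*} [NormedField 𝕜] [NormedSpace ℝ 𝕜] {z : 𝕜}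
    (hz : ‖z‖ ≤ 1) (hz1 : z ≠ 1) :
    Tendsto (fun N : ℕ ↦ (N : ℝ)⁻¹ • ∑ n ∈ Icc 1 N, z ^ n) atTop (𝓝 0) := by
  have hbound (N : ℕ) : ‖∑ n ∈ Icc 1 N, z ^ n‖ ≤ 2 / ‖z - 1‖ := by
    rw [← Finset.Ico_add_one_right_eq_Icc, geom_sum_Ico hz1 (by omega), norm_div]
    gcongr
    calc ‖z ^ (N + 1) - z ^ 1‖ ≤ ‖z ^ (N + 1)‖ + ‖z ^ 1‖ := norm_sub_le _ _
      _ ≤ 1 + 1 := by rw [norm_pow, norm_pow]; gcongr <;> exact pow_le_one₀ (norm_nonneg z) hz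
      _ = 2 := by norm_num
  refine squeeze_zero_norm (fun N ↦ ?_) (tendsto_const_div_atTop_nhds_zero_nat (2 / ‖z - 1‖))
  rw [norm_smul, norm_inv, Real.norm_natCast, ← div_eq_inv_mul]
  gcongr
  exact hbound N

namespace AddCircle

variable {T : ℝ}

lemma fourier_nsmul (k : ℤ) (n : ℕ) (ξ : AddCircle T) : fourier k (n • ξ) = fourier k ξ ^ n := by
  simp only [fourier_apply, smul_comm k n, toCircle_nsmul, Circle.coe_pow]

variable [Fact (0 < T)]

lemma fourier_ne_one_of_not_isOfFinAddOrder {ξ : AddCircle T} (hξ : ¬IsOfFinAddOrder ξ) {k : ℤ}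
    (hk : k ≠ 0) : fourier k ξ ≠ 1 := by
  rw [fourier_apply, ne_eq, ← Circle.coe_one, Circle.coe_inj, ← toCircle_zero,
    (injective_toCircle (Fact.out : 0 < T).ne').eq_iff]
  exact fun h ↦ hξ (isOfFinAddOrder_iff_zsmul_eq_zero.mpr ⟨k, hk, h⟩)

lemma integral_fourier_haarAddCircle (k : ℤ) :
    ∫ x, fourier k x ∂(haarAddCircle : Measure (AddCircle T)) = if k = 0 then 1 else 0 := by
  simpa [fourierCoeff, Pi.single_apply, eq_comm] using congrFun (fourierCoeff_fourier (T := T) k) 0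

lemma tendsto_inv_smul_sum_fourier_nsmul {ξ : AddCircle T} (hξ : ¬IsOfFinAddOrder ξ) (k : ℤ) :
    Tendsto (fun N : ℕ ↦ (N : ℝ)⁻¹ • ∑ n ∈ Icc 1 N, fourier k (n • ξ)) atTop
      (𝓝 (∫ x, fourier k x ∂(haarAddCircle : Measure (AddCircle T)))) := by
  simp only [integral_fourier_haarAddCircle, fourier_nsmul]
  split_ifs with hk
  · subst hk
    refine tendsto_const_nhds.congr' ?_
    filter_upwards [eventually_ne_atTop 0] with N hN
    simp [hN]
  · exact tendsto_inv_smul_sum_pow (Circle.norm_coe _).le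
      (fourier_ne_one_of_not_isOfFinAddOrder hξ hk)

lemma tendsto_inv_smul_sum_nsmul_of_mem_span {ξ : AddCircle T} (hξ : ¬IsOfFinAddOrder ξ)
    {f : C(AddCircle T, ℂ)} (hf : f ∈ Submodule.span ℂ (Set.range fourier)) :
    Tendsto (fun N : ℕ ↦ (N : ℝ)⁻¹ • ∑ n ∈ Icc 1 N, f (n • ξ)) atTop
      (𝓝 (∫ x, f x ∂(haarAddCircle : Measure (AddCircle T)))) := by
  have integrable (g : C(AddCircle T, ℂ)) : Integrable g (haarAddCircle : Measure (AddCircle T)) :=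
    g.continuous.integrable_of_hasCompactSupport (HasCompactSupport.of_compactSpace _)
  induction hf using Submodule.span_induction with
  | mem g hg =>
    obtain ⟨k, rfl⟩ := hg
    exact tendsto_inv_smul_sum_fourier_nsmul hξ k
  | zero => simp
  | add g h _ _ hg hh =>
    simpa [sum_add_distrib, integral_add (integrable g) (integrable h)] using hg.add hh
  | smul c g _ hg =>
    simpa [mul_sum, mul_left_comm c, integral_const_mul] using hg.const_smul c

open BoundedContinuousFunction in
theorem tendsto_empiricalMeasure_nsmul {ξ : AddCircle T} (hξ : ¬IsOfFinAddOrder ξ) :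
    Tendsto (fun N : ℕ ↦ empiricalMeasure (· • ξ) (N + 1)) atTop
      (𝓝 ⟨haarAddCircle, inferInstance⟩) := by
  set A := fourierSubalgebra.comap (toContinuousMapStarₐ (α := AddCircle T) ℂ)
  have hA : A.map (toContinuousMapStarₐ ℂ) = fourierSubalgebra := by
    ext f
    exact ⟨fun ⟨g, hg, hgf⟩ ↦ hgf ▸ hg, fun hf ↦ ⟨mkOfCompact f, hf, rfl⟩⟩
  refine ProbabilityMeasure.tendsto_of_tight_of_separatesPoints ℂ .of_compactSpace
    (hA ▸ fourierSubalgebra_separatesPoints) fun g hg ↦ ?_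
  have hspan : g.toContinuousMap ∈ Submodule.span ℂ (Set.range fourier) := by
    rw [← fourierSubalgebra_coe]
    exact hg
  simp only [integral_empiricalMeasure]
  exact (tendsto_add_atTop_iff_nat 1).mpr (tendsto_inv_smul_sum_nsmul_of_mem_span hξ hspan)

end AddCircle

namespace UnitAddCircle

local notation "𝕋" => UnitAddCircle

lemma injOn_coe_Ioc (t : ℝ) : Set.InjOn ((↑) : ℝ → 𝕋) (Set.Ioc t (t + 1)) := by
  intro x hx y hy hxy
  have := congrArg (AddCircle.equivIoc 1 t) hxy
  rw [AddCircle.equivIoc_coe_eq hx, AddCircle.equivIoc_coe_eq hy] at this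
  exact congrArg Subtype.val this

lemma volume_coe_image {s : Set ℝ} {t : ℝ} (hs : MeasurableSet s) (hst : s ⊆ Set.Ioc t (t + 1)) :
    volume ((↑) '' s : Set 𝕋) = volume s := by
  have hmeas : MeasurableSet ((↑) '' s : Set 𝕋) :=
    hs.image_of_continuousOn_injOn (AddCircle.continuous_mk' 1).continuousOn
      ((injOn_coe_Ioc t).mono hst)
  rw [AddCircle.add_projection_respects_measure 1 t hmeas]
  congr 1
  ext x
  exact ⟨fun ⟨⟨y, hy, hyx⟩, hx⟩ ↦ injOn_coe_Ioc t (hst hy) hx hyx ▸ hy,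
    fun hx ↦ ⟨⟨x, hx, rfl⟩, hst hx⟩⟩

lemma coe_mem_image_Icc_iff {β : ℝ} (hβ : β < 1) (y : ℝ) :
    (y : 𝕋) ∈ ((↑) '' Set.Icc 0 β : Set 𝕋) ↔ Int.fract y ≤ β := by
  refine ⟨fun ⟨x, ⟨hx0, hxβ⟩, hxy⟩ ↦ ?_,
    fun h ↦ ⟨Int.fract y, ⟨Int.fract_nonneg y, h⟩, AddCircle.coe_fract y⟩⟩
  have := congrArg (fun z ↦ (AddCircle.equivIco 1 0 z : ℝ)) hxy
  simp only [AddCircle.coe_equivIco_mk_apply, div_one, mul_one] at this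
  rw [← this, Int.fract_eq_self.mpr ⟨hx0, by linarith⟩]
  exact hxβ

lemma isClosed_coe_image_Icc (β : ℝ) : IsClosed ((↑) '' Set.Icc 0 β : Set 𝕋) :=
  (isCompact_Icc.image (AddCircle.continuous_mk' 1)).isClosed

lemma volume_coe_image_Icc {β : ℝ} (hβ : β < 1) :
    volume ((↑) '' Set.Icc 0 β : Set 𝕋) = ENNReal.ofReal β := by
  rw [volume_coe_image measurableSet_Icc (t := β - 1)
    fun x hx ↦ ⟨by linarith [hx.1], by linarith [hx.2]⟩, Real.volume_Icc, sub_zero]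

lemma volume_frontier_coe_image_Icc {β : ℝ} (h0 : 0 ≤ β) (h1 : β < 1) :
    volume (frontier ((↑) '' Set.Icc 0 β : Set 𝕋)) = 0 := by
  have hopen : IsOpen ((↑) '' Set.Ioo 0 β : Set 𝕋) := QuotientAddGroup.isOpenMap_coe _ isOpen_Ioo
  have hsub : frontier ((↑) '' Set.Icc 0 β : Set 𝕋) ⊆ (↑) '' ({0, β} : Set ℝ) := by
    intro x hx
    rw [frontier, (isClosed_coe_image_Icc β).closure_eq] at hx
    obtain ⟨⟨y, hy, rfl⟩, hint⟩ := hx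
    refine ⟨y, ?_, rfl⟩
    rw [← Set.Icc_sdiff_Ioo_same h0]
    exact ⟨hy, fun hy' ↦ hint <|
      interior_maximal (Set.image_mono Set.Ioo_subset_Icc_self) hopen ⟨y, hy', rfl⟩⟩
  refine measure_mono_null hsub ?_
  rw [volume_coe_image (Set.toFinite _).measurableSet (t := β - 1)
    (by rintro x (rfl | rfl) <;> constructor <;> linarith)]
  exact (Set.toFinite _).measure_zero _

open AddCircle in
theorem equidistFract_of_tendsto_empiricalMeasure {y : ℕ → ℝ}
    (h : Tendsto (fun N ↦ empiricalMeasure (fun n ↦ (y n : 𝕋)) (N + 1)) atTop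
      (𝓝 ⟨haarAddCircle, inferInstance⟩)) :
    EquidistFract y := by
  have haar_eq : (haarAddCircle : Measure 𝕋) = volume := by
    simp [volume_eq_smul_haarAddCircle]
  rintro β ⟨hβ0, hβ1⟩
  rcases hβ1.lt_or_eq with hβ1 | rfl
  · have hlim := ProbabilityMeasure.tendsto_measure_of_null_frontier_of_tendsto' h
      (E := (↑) '' Set.Icc 0 β) (by simpa [haar_eq] using volume_frontier_coe_image_Icc hβ0 hβ1)
    have hlim' := (ENNReal.tendsto_toReal ENNReal.ofReal_ne_top).comp <|
      (by simpa [haar_eq, volume_coe_image_Icc hβ1] using hlim)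
    rw [ENNReal.toReal_ofReal hβ0] at hlim'
    refine (tendsto_add_atTop_iff_nat 1).mp (hlim'.congr fun N ↦ ?_)
    rw [Function.comp_apply, empiricalMeasure_apply _ _ (isClosed_coe_image_Icc β).measurableSet,
      ENNReal.toReal_mul, ENNReal.toReal_inv, ENNReal.toReal_natCast, ENNReal.toReal_natCast]
    simp [coe_mem_image_Icc_iff hβ1, div_eq_inv_mul]
  · refine tendsto_const_nhds.congr' ?_
    filter_upwards [eventually_ne_atTop 0] with N hN
    simp [filter_true_of_mem fun n _ ↦ (Int.fract_lt_one (y n)).le, hN]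

end UnitAddCircle

theorem equidistFract_nat_mul_of_irrational {α : ℝ} (hα : Irrational α) :
    EquidistFract (fun n : ℕ ↦ n * α) := by
  have hξ : ¬IsOfFinAddOrder (α : UnitAddCircle) :=
    AddCircle.not_isOfFinAddOrder_iff_forall_rat_ne_div.mpr fun q ↦ by
      simpa [eq_comm] using hα.ne_rat q
  have horbit : (fun n : ℕ ↦ ((n * α : ℝ) : UnitAddCircle)) = (· • (α : UnitAddCircle)) :=
    funext fun n ↦ by rw [← nsmul_eq_mul, AddCircle.coe_nsmul]
  refine UnitAddCircle.equidistFract_of_tendsto_empiricalMeasure ?_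
  rw [horbit]
  exact AddCircle.tendsto_empiricalMeasure_nsmul hξ

/-- For an integer `a > 1`, the fractional parts of `n·log_φ a` are equidistributed. -/
theorem equidist_n_logPhi
    (φ : ℝ) (hφ : φ = (1 + Real.sqrt 5) / 2)
    (a : ℕ) (ha : 1 < a) :
    EquidistFract (fun n : ℕ => n * (Real.log a / Real.log φ)) := by
  subst hφ
  exact equidistFract_nat_mul_of_irrational <| irrational_log_natCast_div_log ha
    Real.one_lt_goldenRatio fun _ hn ↦ irrational_goldenRatio_pow hn
end

section
/- Every real number β ∈ (0,1) has a unique Zeckendorf expansion: there is a unique sequence μ : ℕ → {0,1} with μ(k)·μ(k+1) = 0 for all k, such that no tail of μ is the sequence (1,0,1,0,...), and β = Σ_{k=1}^∞ μ(k)·ω^k where ω = 1/φ. -/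
open Finset Filter

section Zeck

variable (ω : ℝ)

/-- remainders of the greedy algorithm -/
noncomputable def zr (β : ℝ) : ℕ → ℝ
  | 0 => β
  | k+1 => if ω^(k+1) ≤ zr β k then zr β k - ω^(k+1) else zr β k

/-- greedy digits -/
noncomputable def zmu (β : ℝ) : ℕ → ℕ
  | 0 => 0
  | k+1 => if ω^(k+1) ≤ zr ω β k then 1 else 0

lemma zr_zero (β : ℝ) : zr ω β 0 = β := rfl

lemma zr_succ' (β : ℝ) (k : ℕ) :
    zr ω β (k+1) = if ω^(k+1) ≤ zr ω β k then zr ω β k - ω^(k+1) else zr ω β k := rfl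

lemma zmu_zero (β : ℝ) : zmu ω β 0 = 0 := rfl

lemma zmu_succ (β : ℝ) (k : ℕ) :
    zmu ω β (k+1) = if ω^(k+1) ≤ zr ω β k then 1 else 0 := rfl

lemma zmu_le (β : ℝ) (k : ℕ) : zmu ω β k ≤ 1 := by
  cases k with
  | zero => simp [zmu_zero]
  | succ k => rw [zmu_succ]; split <;> simp

lemma zr_succ (β : ℝ) (k : ℕ) :
    zr ω β (k+1) = zr ω β k - (zmu ω β (k+1) : ℝ) * ω^(k+1) := by
  rw [zr_succ', zmu_succ]; split <;> simp

lemma zsummable (h0 : 0 < ω) (h1 : ω < 1) (ν : ℕ → ℕ) (hb : ∀ k, ν k ≤ 1) (c : ℕ) :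
    Summable (fun k => (ν (c+k) : ℝ) * ω ^ (c+k)) := by
  refine Summable.of_nonneg_of_le (fun k => by positivity) (fun k => ?_)
    ((summable_geometric_of_lt_one h0.le h1).mul_left (ω^c))
  have : (ν (c+k) : ℝ) ≤ 1 := by exact_mod_cast hb (c+k)
  calc (ν (c+k) : ℝ) * ω ^ (c+k) ≤ 1 * ω ^ (c+k) :=
        mul_le_mul_of_nonneg_right this (by positivity)
  _ = ω^c * ω^k := by rw [one_mul, pow_add]

lemma zsummable' (h0 : 0 < ω) (h1 : ω < 1) (ν : ℕ → ℕ) (hb : ∀ k, ν k ≤ 1) (c : ℕ) :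
    Summable (fun k => (ν (k+c) : ℝ) * ω ^ (k+c)) := by
  have := zsummable ω h0 h1 ν hb c
  refine this.congr fun k => ?_
  rw [Nat.add_comm c k]


/-- tail sum from index i+1 -/
noncomputable def ztailS (ν : ℕ → ℕ) (i : ℕ) : ℝ := ∑' k, (ν (i+1+k) : ℝ) * ω ^ (i+1+k)

lemma zterm_congr (ν : ℕ → ℕ) {a b : ℕ} (h : a = b) :
    (ν a : ℝ) * ω ^ a = (ν b : ℝ) * ω ^ b := by rw [h]

lemma zpartial (h0 : 0 < ω) (h1 : ω < 1) (hq : ω^2 = 1 - ω)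
    (ν : ℕ → ℕ) (hb : ∀ k, ν k ≤ 1) (hc : ∀ m, 1 ≤ m → ν m * ν (m+1) = 0) :
    ∀ N i, (∑ k ∈ Finset.range N, (ν (i+1+k) : ℝ) * ω ^ (i+1+k)) ≤ ω ^ i := by
  intro N
  induction N using Nat.strong_induction_on with
  | _ N ih =>
    intro i
    match N with
    | 0 => simpa using le_of_lt (pow_pos h0 i)
    | M + 1 =>
      rw [Finset.sum_range_succ']
      have hsh : (∑ k ∈ Finset.range M, (ν (i+1+(k+1)) : ℝ) * ω ^ (i+1+(k+1)))
          = ∑ k ∈ Finset.range M, (ν (i+2+k) : ℝ) * ω ^ (i+2+k) :=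
        Finset.sum_congr rfl fun k _ => zterm_congr ω ν (by omega)
      rw [hsh]
      have hle01 : ν (i+1) = 0 ∨ ν (i+1) = 1 := by have := hb (i+1); omega
      rcases hle01 with hz | ho
      · have h2 : (∑ k ∈ Finset.range M, (ν (i+2+k) : ℝ) * ω ^ (i+2+k)) ≤ ω ^ (i+1) := by
          have h3 := ih M (by omega) (i+1)
          have h4 : (∑ k ∈ Finset.range M, (ν (i+1+1+k) : ℝ) * ω ^ (i+1+1+k))
              = ∑ k ∈ Finset.range M, (ν (i+2+k) : ℝ) * ω ^ (i+2+k) :=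
            Finset.sum_congr rfl fun k _ => zterm_congr ω ν (by omega)
          rw [h4] at h3; exact h3
        have h5 : ω ^ (i+1) ≤ ω ^ i := pow_le_pow_of_le_one h0.le h1.le (by omega)
        simp only [Nat.add_zero, hz]
        push_cast
        linarith
      · have hnext : ν (i+2) = 0 := by
          have h6 := hc (i+1) (by omega)
          rw [ho, one_mul] at h6
          exact h6
        have h2 : (∑ k ∈ Finset.range M, (ν (i+2+k) : ℝ) * ω ^ (i+2+k)) ≤ ω ^ (i+2) := by
          match M with
          | 0 => simpa using le_of_lt (pow_pos h0 (i+2))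
          | M' + 1 =>
            rw [Finset.sum_range_succ']
            have hsum' : (∑ k ∈ Finset.range M', (ν (i+2+(k+1)) : ℝ) * ω ^ (i+2+(k+1)))
                ≤ ω ^ (i+2) := by
              have h7 := ih M' (by omega) (i+2)
              have h8 : (∑ k ∈ Finset.range M', (ν (i+2+1+k) : ℝ) * ω ^ (i+2+1+k))
                  = ∑ k ∈ Finset.range M', (ν (i+2+(k+1)) : ℝ) * ω ^ (i+2+(k+1)) :=
                Finset.sum_congr rfl fun k _ => zterm_congr ω ν (by omega)
              rw [h8] at h7; exact h7
            have h9 : ω ^ (i+2) + ω ^ (i+2) ≤ ω ^ (i+2) + ω ^ (i+2) := le_refl _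
            simp only [Nat.add_zero, hnext]
            push_cast
            linarith
        simp only [Nat.add_zero, ho]
        push_cast
        have key : ω ^ (i+2) + ω ^ (i+1) = ω ^ i := by
          have e : ω^(i+2) = ω^i * ω^2 := by ring
          have e' : ω^(i+1) = ω^i * ω := by ring
          rw [e, e', hq]; ring
        linarith

lemma ztailS_le (h0 : 0 < ω) (h1 : ω < 1) (hq : ω^2 = 1 - ω)
    (ν : ℕ → ℕ) (hb : ∀ k, ν k ≤ 1) (hc : ∀ m, 1 ≤ m → ν m * ν (m+1) = 0) (i : ℕ) :
    ztailS ω ν i ≤ ω ^ i := by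
  refine Summable.tsum_le_of_sum_range_le ?_ (fun N => zpartial ω h0 h1 hq ν hb hc N i)
  exact zsummable ω h0 h1 ν hb (i+1)

lemma ztailS_nonneg (h0 : 0 < ω) (ν : ℕ → ℕ) (i : ℕ) : 0 ≤ ztailS ω ν i :=
  tsum_nonneg fun k => by positivity

lemma ztailS_rec (h0 : 0 < ω) (h1 : ω < 1) (ν : ℕ → ℕ) (hb : ∀ k, ν k ≤ 1) (i : ℕ) :
    ztailS ω ν i = (ν (i+1) : ℝ) * ω ^ (i+1) + ztailS ω ν (i+1) := by
  unfold ztailS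
  have ht : (∑' k, (ν (i+1+(k+1)) : ℝ) * ω ^ (i+1+(k+1))) = ztailS ω ν (i+1) :=
    tsum_congr fun k => zterm_congr ω ν (by omega)
  rw [Summable.tsum_eq_zero_add (zsummable ω h0 h1 ν hb (i+1))]
  exact congrArg₂ (· + ·) rfl ht

lemma ztailS_step (h0 : 0 < ω) (h1 : ω < 1) (hq : ω^2 = 1 - ω)
    (ν : ℕ → ℕ) (hb : ∀ k, ν k ≤ 1) (hc : ∀ m, 1 ≤ m → ν m * ν (m+1) = 0)
    (j : ℕ) (h : ztailS ω ν j = ω ^ j) :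
    ν (j+1) = 1 ∧ ν (j+2) = 0 ∧ ztailS ω ν (j+2) = ω ^ (j+2) := by
  have hrec := ztailS_rec ω h0 h1 ν hb j
  have hν1 : ν (j+1) = 1 := by
    by_contra hne
    have hz : ν (j+1) = 0 := by have := hb (j+1); omega
    rw [h, hz] at hrec
    have hle := ztailS_le ω h0 h1 hq ν hb hc (j+1)
    have : ω ^ (j+1) < ω ^ j := pow_lt_pow_right_of_lt_one₀ h0 h1 (by omega)
    simp at hrec
    linarith
  have hν2 : ν (j+2) = 0 := by
    have h6 := hc (j+1) (by omega)
    rw [hν1, one_mul] at h6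
    exact h6
  refine ⟨hν1, hν2, ?_⟩
  have hrec2 := ztailS_rec ω h0 h1 ν hb (j+1)
  have e2 : ν (j+1+1) = 0 := hν2
  rw [e2] at hrec2
  simp only [Nat.cast_zero, zero_mul, zero_add] at hrec2
  have e3 : ztailS ω ν (j+1+1) = ztailS ω ν (j+2) := rfl
  rw [h, hν1, Nat.cast_one, one_mul, hrec2, e3] at hrec
  have : ω ^ j - ω ^ (j+1) = ω ^ (j+2) := by
    have e : ω^(j+2) = ω^j * ω^2 := by ring
    rw [e, hq]; ring
  linarith

lemma ztailS_alt (h0 : 0 < ω) (h1 : ω < 1) (hq : ω^2 = 1 - ω)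
    (ν : ℕ → ℕ) (hb : ∀ k, ν k ≤ 1) (hc : ∀ m, 1 ≤ m → ν m * ν (m+1) = 0)
    (i : ℕ) (h : ztailS ω ν i = ω ^ i) :
    ∀ n, 1 ≤ n → ν (i+n) = if n % 2 = 1 then 1 else 0 := by
  have main : ∀ m, ztailS ω ν (i+2*m) = ω ^ (i+2*m)
      ∧ ν (i+2*m+1) = 1 ∧ ν (i+2*m+2) = 0 := by
    intro m
    induction m with
    | zero =>
      obtain ⟨a, b, c⟩ := ztailS_step ω h0 h1 hq ν hb hc i h
      exact ⟨by simpa using h, by simpa using a, by simpa using b⟩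
    | succ m ihm =>
      obtain ⟨hS, _, _⟩ := ihm
      obtain ⟨a, b, c⟩ := ztailS_step ω h0 h1 hq ν hb hc (i+2*m) hS
      have e : i + 2*(m+1) = i + 2*m + 2 := by omega
      rw [e]
      refine ⟨c, ?_, ?_⟩
      · obtain ⟨a', b', c'⟩ := ztailS_step ω h0 h1 hq ν hb hc (i+2*m+2) c
        exact a'
      · obtain ⟨a', b', c'⟩ := ztailS_step ω h0 h1 hq ν hb hc (i+2*m+2) c
        exact b'
  intro n hn
  obtain ⟨m, rfl | rfl⟩ : ∃ m, n = 2*m+1 ∨ n = 2*m+2 := ⟨(n-1)/2, by omega⟩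
  · have e : (2*m+1) % 2 = 1 := by omega
    rw [if_pos e]
    exact (main m).2.1
  · have e : ¬ ((2*m+2) % 2 = 1) := by omega
    rw [if_neg e]
    exact (main m).2.2

lemma ztailS_alt_ge (h0 : 0 < ω) (h1 : ω < 1) (hq : ω^2 = 1 - ω)
    (ν : ℕ → ℕ) (hb : ∀ k, ν k ≤ 1) (j : ℕ)
    (h : ∀ n, 1 ≤ n → ν (j+n) = if n % 2 = 1 then 1 else 0) :
    ω ^ j ≤ ztailS ω ν j := by
  have hf : Summable (fun k => (ν (j+1+k) : ℝ) * ω ^ (j+1+k)) := zsummable ω h0 h1 ν hb (j+1)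
  have hterm : ∀ m : ℕ, (ν (j+1+2*m) : ℝ) * ω ^ (j+1+2*m) = ω^(j+1) * (ω^2)^m := by
    intro m
    have e : j+1+2*m = j+(2*m+1) := by omega
    have hv : ν (j+(2*m+1)) = 1 := by
      rw [h (2*m+1) (by omega), if_pos (by omega)]
    rw [e, hv, Nat.cast_one, one_mul]
    rw [← pow_mul, ← pow_add]
    congr 1
    omega
  have hstep : ∀ M : ℕ, (∑ m ∈ Finset.range M, ω^(j+1) * (ω^2)^m) ≤ ztailS ω ν j := by
    intro M
    have himg := Finset.sum_image (g := fun m => 2*m) (s := Finset.range M)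
      (f := fun k => (ν (j+1+k) : ℝ) * ω ^ (j+1+k))
      (fun a _ b _ hab => by dsimp only at hab; omega)
    have hle : (∑ k ∈ (Finset.range M).image (fun m => 2*m), (ν (j+1+k) : ℝ) * ω ^ (j+1+k))
        ≤ ztailS ω ν j := Summable.sum_le_tsum _ (fun k _ => by positivity) hf
    rw [himg] at hle
    calc (∑ m ∈ Finset.range M, ω^(j+1) * (ω^2)^m)
        = ∑ m ∈ Finset.range M, (ν (j+1+2*m) : ℝ) * ω ^ (j+1+2*m) :=
          Finset.sum_congr rfl fun m _ => (hterm m).symm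
      _ ≤ ztailS ω ν j := hle
  have hω2 : ω^2 < 1 := by nlinarith
  have hgeom : HasSum (fun m : ℕ => ω^(j+1) * (ω^2)^m) (ω^(j+1) * (1 - ω^2)⁻¹) :=
    (hasSum_geometric_of_lt_one (by positivity) hω2).mul_left _
  have hval : ω^(j+1) * (1 - ω^2)⁻¹ = ω ^ j := by
    rw [hq]
    have : (1 : ℝ) - (1 - ω) = ω := by ring
    rw [this]
    field_simp
    ring
  have hlim : Tendsto (fun M => ∑ m ∈ Finset.range M, ω^(j+1) * (ω^2)^m)
      atTop (nhds (ω ^ j)) := by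
    have := hgeom.tendsto_sum_nat
    rwa [hval] at this
  exact le_of_tendsto' hlim hstep


lemma zinv (h0 : 0 < ω) (h1 : ω < 1) (hq : ω^2 = 1 - ω)
    (β : ℝ) (hb0 : 0 ≤ β) (hb1 : β < 1) :
    ∀ k, 0 ≤ zr ω β k ∧ zr ω β k < ω^k ∧ (zmu ω β k = 1 → zr ω β k < ω^(k+1)) := by
  intro k
  induction k with
  | zero =>
    refine ⟨hb0, by simpa [zr_zero] using hb1, fun h => ?_⟩
    rw [zmu_zero] at h; exact absurd h (by norm_num)
  | succ k ih =>
    obtain ⟨hge, hlt, _⟩ := ih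
    have hsplit : ω^(k+1) + ω^(k+2) = ω^k := by
      have e : ω^(k+2) = ω^k * ω^2 := by ring
      have e2 : ω^(k+1) = ω^k * ω := by ring
      rw [e, e2, hq]; ring
    have hdec : ω^(k+2) < ω^(k+1) := pow_lt_pow_right_of_lt_one₀ h0 h1 (by omega)
    rw [zr_succ', zmu_succ]
    split_ifs with hle
    · refine ⟨by linarith, by linarith, fun _ => ?_⟩
      have : k + 1 + 1 = k + 2 := rfl
      rw [this]
      linarith
    · push_neg at hle
      exact ⟨hge, hle, fun h => absurd h (by norm_num)⟩

lemma zmu_consec (h0 : 0 < ω) (h1 : ω < 1) (hq : ω^2 = 1 - ω)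
    (β : ℝ) (hb0 : 0 ≤ β) (hb1 : β < 1) :
    ∀ m, 1 ≤ m → zmu ω β m * zmu ω β (m+1) = 0 := by
  intro m hm
  obtain ⟨k, rfl⟩ : ∃ k, m = k + 1 := ⟨m - 1, by omega⟩
  have h01 : zmu ω β (k+1) = 0 ∨ zmu ω β (k+1) = 1 := by have := zmu_le ω β (k+1); omega
  rcases h01 with h | h
  · rw [h, zero_mul]
  · have hsm := (zinv ω h0 h1 hq β hb0 hb1 (k+1)).2.2 h
    have : zmu ω β (k+1+1) = 0 := by
      rw [zmu_succ]
      rw [if_neg (by push_neg; exact hsm)]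
    rw [this, mul_zero]

lemma zsum (β : ℝ) :
    ∀ N, (∑ k ∈ Finset.range N, (zmu ω β (k+1) : ℝ) * ω^(k+1)) = β - zr ω β N := by
  intro N
  induction N with
  | zero => simp [zr_zero]
  | succ N ih =>
    rw [Finset.sum_range_succ, ih, zr_succ ω β N]
    ring

lemma ztail_lt (h0 : 0 < ω) (h1 : ω < 1) (hq : ω^2 = 1 - ω)
    (μ ν : ℕ → ℕ) (hμb : ∀ k, μ k ≤ 1) (hνb : ∀ k, ν k ≤ 1)
    (hνc : ∀ m, 1 ≤ m → ν m * ν (m+1) = 0) (i : ℕ)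
    (hνt : ¬ ∀ n, 1 ≤ n → ν (i+1+n) = if n % 2 = 1 then 1 else 0)
    (hμ : μ (i+1) = 1) (hν : ν (i+1) = 0) :
    ztailS ω ν i < ztailS ω μ i := by
  have hrecμ := ztailS_rec ω h0 h1 μ hμb i
  have hrecν := ztailS_rec ω h0 h1 ν hνb i
  have hle := ztailS_le ω h0 h1 hq ν hνb hνc (i+1)
  have hne : ztailS ω ν (i+1) ≠ ω^(i+1) :=
    fun h => hνt (ztailS_alt ω h0 h1 hq ν hνb hνc (i+1) h)
  have h3 := ztailS_nonneg ω h0 μ (i+1)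
  rw [hμ] at hrecμ
  rw [hν] at hrecν
  have hstrict : ztailS ω ν (i+1) < ω^(i+1) := lt_of_le_of_ne hle hne
  push_cast at hrecμ hrecν
  rw [zero_mul, zero_add] at hrecν
  rw [one_mul] at hrecμ
  linarith

lemma zeck_unique (h0 : 0 < ω) (h1 : ω < 1) (hq : ω^2 = 1 - ω)
    (μ ν : ℕ → ℕ)
    (hμ0 : μ 0 = 0) (hμb : ∀ k, μ k ≤ 1)
    (hμc : ∀ m, 1 ≤ m → μ m * μ (m+1) = 0)
    (hμt : ∀ j : ℕ, ¬ (∀ n, 1 ≤ n → μ (j + n) = if n % 2 = 1 then 1 else 0))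
    (hν0 : ν 0 = 0) (hνb : ∀ k, ν k ≤ 1)
    (hνc : ∀ m, 1 ≤ m → ν m * ν (m+1) = 0)
    (hνt : ∀ j : ℕ, ¬ (∀ n, 1 ≤ n → ν (j + n) = if n % 2 = 1 then 1 else 0))
    (hsum : (∑' k, (μ (k+1) : ℝ) * ω^(k+1)) = ∑' k, (ν (k+1) : ℝ) * ω^(k+1)) :
    μ = ν := by
  classical
  by_contra hne
  have hex : ∃ j, μ j ≠ ν j := Function.ne_iff.mp hne
  have hj := Nat.find_spec hex
  have hmin : ∀ m, m < Nat.find hex → μ m = ν m :=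
    fun m hm => not_ne_iff.mp (Nat.find_min hex hm)
  have hpos : Nat.find hex ≠ 0 := by
    intro h
    rw [h] at hj
    exact hj (hμ0.trans hν0.symm)
  obtain ⟨i, hi⟩ : ∃ i, Nat.find hex = i + 1 := ⟨Nat.find hex - 1, by omega⟩
  rw [hi] at hj
  have hmin' : ∀ m, m < i + 1 → μ m = ν m := fun m hm => hmin m (by omega)
  have hμs := zsummable' ω h0 h1 μ hμb 1
  have hνs := zsummable' ω h0 h1 ν hνb 1
  have h1' := Summable.sum_add_tsum_nat_add (f := fun k => (μ (k+1) : ℝ) * ω^(k+1)) i hμs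
  have h2' := Summable.sum_add_tsum_nat_add (f := fun k => (ν (k+1) : ℝ) * ω^(k+1)) i hνs
  have e1 : (∑' (k : ℕ), (μ (k+i+1) : ℝ) * ω^(k+i+1)) = ztailS ω μ i :=
    tsum_congr fun k => zterm_congr ω μ (by omega)
  have e2 : (∑' (k : ℕ), (ν (k+i+1) : ℝ) * ω^(k+i+1)) = ztailS ω ν i :=
    tsum_congr fun k => zterm_congr ω ν (by omega)
  have hpre : (∑ k ∈ Finset.range i, (μ (k+1) : ℝ) * ω^(k+1))
      = ∑ k ∈ Finset.range i, (ν (k+1) : ℝ) * ω^(k+1) := by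
    refine Finset.sum_congr rfl fun k hk => ?_
    rw [Finset.mem_range] at hk
    rw [hmin' (k+1) (by omega)]
  have hTeq : ztailS ω μ i = ztailS ω ν i := by
    have h1'' : (∑ k ∈ Finset.range i, (μ (k+1) : ℝ) * ω^(k+1)) + ztailS ω μ i
        = ∑' k, (μ (k+1) : ℝ) * ω^(k+1) := by
      rw [← e1]; simpa using h1'
    have h2'' : (∑ k ∈ Finset.range i, (ν (k+1) : ℝ) * ω^(k+1)) + ztailS ω ν i
        = ∑' k, (ν (k+1) : ℝ) * ω^(k+1) := by
      rw [← e2]; simpa using h2'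
    rw [hpre] at h1''
    linarith [hsum, h1'', h2'']
  have hb1 := hμb (i+1)
  have hb2 := hνb (i+1)
  have hcase : (μ (i+1) = 1 ∧ ν (i+1) = 0) ∨ (μ (i+1) = 0 ∧ ν (i+1) = 1) := by omega
  rcases hcase with ⟨ha, hb⟩ | ⟨ha, hb⟩
  · have := ztail_lt ω h0 h1 hq μ ν hμb hνb hνc i (hνt (i+1)) ha hb
    linarith
  · have := ztail_lt ω h0 h1 hq ν μ hνb hμb hμc i (hμt (i+1)) hb ha
    linarith

end Zeck

/-- Zeckendorf's theorem for `(0,1)`: every `β ∈ (0,1)` has a unique expansion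
`β = Σ_{k≥1} μ(k) ω^k` with 0/1 coefficients, no two consecutive 1's, and no
tail of `μ` equal to the alternating sequence `(1,0,1,0,…)`. -/
theorem zeckendorf_theorem_unitInterval
    (φ ω : ℝ) (hφ : φ = (1 + Real.sqrt 5) / 2) (hω : ω = 1 / φ)
    (β : ℝ) (hβ : β ∈ Set.Ioo (0 : ℝ) 1) :
    ∃! μ : ℕ → ℕ,
      μ 0 = 0 ∧
      (∀ k, μ k ≤ 1) ∧
      (∀ k, 1 ≤ k → μ k * μ (k + 1) = 0) ∧
      (∀ j : ℕ, ¬ (∀ n, 1 ≤ n → μ (j + n) = if n % 2 = 1 then 1 else 0)) ∧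
      β = ∑' k : ℕ, (μ (k + 1) : ℝ) * ω ^ (k + 1) := by
  obtain ⟨hβ0, hβ1⟩ := hβ
  have h5 : Real.sqrt 5 ^ 2 = 5 := Real.sq_sqrt (by norm_num)
  have h5pos : (1:ℝ) < Real.sqrt 5 := by nlinarith [Real.sqrt_nonneg 5]
  have hφ1 : 1 < φ := by rw [hφ]; linarith
  have hφpos : 0 < φ := by linarith
  have h0 : 0 < ω := by rw [hω]; positivity
  have h1 : ω < 1 := by
    rw [hω]
    rw [div_lt_one hφpos]
    exact hφ1
  have hφ2 : φ^2 = φ + 1 := by rw [hφ]; nlinarith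
  have hq : ω^2 = 1 - ω := by
    rw [hω]
    field_simp
    nlinarith
  -- the greedy expansion
  have hμb := zmu_le ω β
  have hμc := zmu_consec ω h0 h1 hq β hβ0.le hβ1
  have hinv := zinv ω h0 h1 hq β hβ0.le hβ1
  have hμs : Summable (fun k => (zmu ω β (k+1) : ℝ) * ω^(k+1)) :=
    zsummable' ω h0 h1 (zmu ω β) hμb 1
  have hr0 : Filter.Tendsto (fun N => zr ω β N) Filter.atTop (nhds 0) := by
    refine squeeze_zero (fun n => (hinv n).1) (fun n => (hinv n).2.1.le) ?_
    exact tendsto_pow_atTop_nhds_zero_of_lt_one h0.le h1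
  have hten : Filter.Tendsto (fun N => ∑ k ∈ Finset.range N, (zmu ω β (k+1) : ℝ) * ω^(k+1))
      Filter.atTop (nhds β) := by
    have : Filter.Tendsto (fun N => β - zr ω β N) Filter.atTop (nhds (β - 0)) :=
      Filter.Tendsto.const_sub β hr0
    rw [sub_zero] at this
    refine this.congr fun N => (zsum ω β N).symm
  have hhs : HasSum (fun k => (zmu ω β (k+1) : ℝ) * ω^(k+1)) β :=
    (hμs.hasSum_iff_tendsto_nat).mpr hten
  have hμsum : β = ∑' k : ℕ, (zmu ω β (k+1) : ℝ) * ω^(k+1) := hhs.tsum_eq.symm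
  have hμt : ∀ j : ℕ, ¬ (∀ n, 1 ≤ n → zmu ω β (j + n) = if n % 2 = 1 then 1 else 0) := by
    intro j hcontra
    have htj : ztailS ω (zmu ω β) j = zr ω β j := by
      have hsplit := Summable.sum_add_tsum_nat_add (f := fun k => (zmu ω β (k+1) : ℝ) * ω^(k+1)) j hμs
      have e1 : (∑' (k : ℕ), (zmu ω β (k+j+1) : ℝ) * ω^(k+j+1)) = ztailS ω (zmu ω β) j :=
        tsum_congr fun k => zterm_congr ω (zmu ω β) (by omega)
      have h2'' : (∑ k ∈ Finset.range j, (zmu ω β (k+1) : ℝ) * ω^(k+1)) + ztailS ω (zmu ω β) j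
          = ∑' k, (zmu ω β (k+1) : ℝ) * ω^(k+1) := by
        rw [← e1]; simpa using hsplit
      rw [zsum ω β j, ← hμsum] at h2''
      linarith
    have hge := ztailS_alt_ge ω h0 h1 hq (zmu ω β) hμb j hcontra
    have hlt := (hinv j).2.1
    rw [htj] at hge
    linarith
  refine ⟨zmu ω β, ⟨zmu_zero ω β, hμb, hμc, hμt, hμsum⟩, ?_⟩
  rintro ν ⟨hν0, hνb, hνc, hνt, hνsum⟩
  exact zeck_unique ω h0 h1 hq ν (zmu ω β) hν0 hνb hνc hνt
    (zmu_zero ω β) hμb hμc hμt (hνsum.symm.trans hμsum)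
end

section
/- Let μ, τ : ℕ → {0,1} be Zeckendorf expressions for (0,1) (no two consecutive 1's, no tail equal to (1,0,1,0,...)). Then Σ_k μ(k)ω^k < Σ_k τ(k)ω^k if and only if there exists s such that (μ(1),...,μ(s)) is lexicographically less than (τ(1),...,τ(s)). -/
open Finset

set_option linter.unusedSectionVars false

section Aux

variable {ω : ℝ} (hω0 : 0 < ω) (hω1 : ω < 1) (hsq : ω ^ 2 = 1 - ω)
variable {μ : ℕ → ℕ} (hμ1 : ∀ k, μ k ≤ 1) (hμ2 : ∀ k, 1 ≤ k → μ k * μ (k + 1) = 0)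

include hω0 hω1 hsq hμ1 hμ2

lemma zk_summable (s : ℕ) :
    Summable (fun k : ℕ => (μ (k + s + 1) : ℝ) * ω ^ (k + s + 1)) := by
  apply Summable.of_nonneg_of_le (fun k => by positivity) (fun k => ?_)
    ((summable_geometric_of_lt_one hω0.le hω1).mul_left (ω ^ (s + 1)))
  calc (μ (k + s + 1) : ℝ) * ω ^ (k + s + 1) ≤ 1 * ω ^ (k + s + 1) := by
        apply mul_le_mul_of_nonneg_right _ (by positivity)
        exact_mod_cast hμ1 _
    _ = ω ^ (s + 1) * ω ^ k := by rw [one_mul, show k + s + 1 = (s+1) + k by omega, pow_add]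

lemma zk_peel (s : ℕ) :
    ∑' k : ℕ, (μ (k + s + 1) : ℝ) * ω ^ (k + s + 1)
      = (μ (s + 1) : ℝ) * ω ^ (s + 1)
        + ∑' k : ℕ, (μ (k + (s + 1) + 1) : ℝ) * ω ^ (k + (s + 1) + 1) := by
  rw [Summable.tsum_eq_zero_add (zk_summable hω0 hω1 hsq hμ1 hμ2 s)]
  congr 1
  · norm_num
  · apply tsum_congr; intro k
    rw [show k + 1 + s + 1 = k + (s + 1) + 1 by omega]

lemma zk_finsum_le :
    ∀ N s : ℕ, ∑ k ∈ range N, (μ (k + s + 1) : ℝ) * ω ^ (k + s + 1)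
      ≤ ω ^ s - ω ^ (s + N + 1) := by
  intro N
  induction N using Nat.strong_induction_on with
  | _ N ih =>
    intro s
    match N with
    | 0 =>
      simp only [range_zero, sum_empty]
      have := pow_le_pow_of_le_one hω0.le hω1.le (show s ≤ s + 0 + 1 by omega)
      linarith
    | (M + 1) =>
      rw [Finset.sum_range_succ']
      have hrw : ∑ i ∈ range M, (μ (i + 1 + s + 1) : ℝ) * ω ^ (i + 1 + s + 1)
          = ∑ i ∈ range M, (μ (i + (s + 1) + 1) : ℝ) * ω ^ (i + (s + 1) + 1) := by
        apply Finset.sum_congr rfl; intro i _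
        rw [show i + 1 + s + 1 = i + (s + 1) + 1 by omega]
      rw [hrw]
      rcases Nat.le_one_iff_eq_zero_or_eq_one.mp (hμ1 (s + 1)) with h | h
      · have hb := ih M (by omega) (s + 1)
        have h0 : (μ (0 + s + 1) : ℝ) * ω ^ (0 + s + 1) = 0 := by
          rw [show 0 + s + 1 = s + 1 by omega, h]; norm_num
        have hp : ω ^ (s + 1) ≤ ω ^ s := pow_le_pow_of_le_one hω0.le hω1.le (by omega)
        rw [show s + 1 + M + 1 = s + (M + 1) + 1 by omega] at hb
        linarith
      · have h2 : μ (s + 2) = 0 := by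
          have := hμ2 (s + 1) (by omega)
          rw [h, show s + 1 + 1 = s + 2 by omega] at this
          omega
        have h0 : (μ (0 + s + 1) : ℝ) * ω ^ (0 + s + 1) = ω ^ (s + 1) := by
          rw [show 0 + s + 1 = s + 1 by omega, h]; norm_num
        have key : ω ^ (s + 1) + ω ^ (s + 2) = ω ^ s := by
          have e1 : ω ^ (s + 1) = ω ^ s * ω := pow_succ ω s
          have e2 : ω ^ (s + 2) = ω ^ s * ω ^ 2 := by ring
          rw [e1, e2, hsq]; ring
        match M with
        | 0 =>
          simp only [range_zero, sum_empty, zero_add]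
          rw [h, show s + 1 + 1 = s + 2 by omega]
          push_cast
          have hp : (0:ℝ) ≤ ω ^ (s + 2) := by positivity
          linarith
        | (P + 1) =>
          rw [Finset.sum_range_succ']
          have hrw2 : ∑ i ∈ range P, (μ (i + 1 + (s + 1) + 1) : ℝ) * ω ^ (i + 1 + (s + 1) + 1)
              = ∑ i ∈ range P, (μ (i + (s + 2) + 1) : ℝ) * ω ^ (i + (s + 2) + 1) := by
            apply Finset.sum_congr rfl; intro i _
            rw [show i + 1 + (s + 1) + 1 = i + (s + 2) + 1 by omega]
          rw [hrw2]
          have hb := ih P (by omega) (s + 2)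
          have h00 : (μ (0 + (s + 1) + 1) : ℝ) * ω ^ (0 + (s + 1) + 1) = 0 := by
            rw [show 0 + (s + 1) + 1 = s + 2 by omega, h2]; norm_num
          rw [show s + 2 + P + 1 = s + (P + 1 + 1) + 1 by omega] at hb
          linarith

lemma zk_tsum_le (s : ℕ) :
    ∑' k : ℕ, (μ (k + s + 1) : ℝ) * ω ^ (k + s + 1) ≤ ω ^ s := by
  apply Real.tsum_le_of_sum_range_le (fun k => by positivity)
  intro n
  have h1 := zk_finsum_le hω0 hω1 hsq hμ1 hμ2 n s
  have h2 : (0:ℝ) ≤ ω ^ (s + n + 1) := by positivity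
  linarith

lemma zk_tsum_lt :
    ∀ n s : ℕ, 1 ≤ n → μ (s + n) ≠ (if n % 2 = 1 then 1 else 0) →
      ∑' k : ℕ, (μ (k + s + 1) : ℝ) * ω ^ (k + s + 1) < ω ^ s := by
  intro n
  induction n using Nat.strong_induction_on with
  | _ n ih =>
    intro s hn hdev
    rcases Nat.le_one_iff_eq_zero_or_eq_one.mp (hμ1 (s + 1)) with h | h
    · rw [zk_peel hω0 hω1 hsq hμ1 hμ2 s, h]
      have hle := zk_tsum_le hω0 hω1 hsq hμ1 hμ2 (s + 1)
      have hlt : ω ^ (s + 1) < ω ^ s := by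
        calc ω ^ (s + 1) = ω ^ s * ω := pow_succ ω s
        _ < ω ^ s * 1 := by
            exact mul_lt_mul_of_pos_left hω1 (pow_pos hω0 s)
        _ = ω ^ s := mul_one _
      push_cast
      linarith
    · have h2 : μ (s + 2) = 0 := by
        have := hμ2 (s + 1) (by omega)
        rw [h, show s + 1 + 1 = s + 2 by omega] at this
        omega
      have hn3 : 3 ≤ n := by
        rcases Nat.lt_or_ge n 3 with hlt | hge
        · interval_cases n
          · simp only [Nat.one_mod] at hdev
            rw [show s + 1 = s + 1 by rfl] at hdev
            simp at hdev
            omega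
          · simp only [show 2 % 2 = 0 by norm_num] at hdev
            simp at hdev
            omega
        · exact hge
      have hdev' : μ (s + 2 + (n - 2)) ≠ (if (n - 2) % 2 = 1 then 1 else 0) := by
        rw [show s + 2 + (n - 2) = s + n by omega, show (n - 2) % 2 = n % 2 by omega]
        exact hdev
      have ihh := ih (n - 2) (by omega) (s + 2) (by omega) hdev'
      rw [zk_peel hω0 hω1 hsq hμ1 hμ2 s, zk_peel hω0 hω1 hsq hμ1 hμ2 (s + 1), h,
        show s + 1 + 1 = s + 2 by omega, h2]
      have key : ω ^ (s + 1) + ω ^ (s + 2) = ω ^ s := by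
        have e1 : ω ^ (s + 1) = ω ^ s * ω := pow_succ ω s
        have e2 : ω ^ (s + 2) = ω ^ s * ω ^ 2 := by ring
        rw [e1, e2, hsq]; ring
      push_cast
      linarith

end Aux

open Finset in
lemma zk_key {ω : ℝ} (hω0 : 0 < ω) (hω1 : ω < 1) (hsq : ω ^ 2 = 1 - ω)
    {μ τ : ℕ → ℕ}
    (hμ1 : ∀ k, μ k ≤ 1) (hμ2 : ∀ k, 1 ≤ k → μ k * μ (k + 1) = 0)
    (hμ3 : ∀ j : ℕ, ¬ (∀ n, 1 ≤ n → μ (j + n) = if n % 2 = 1 then 1 else 0))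
    (hτ1 : ∀ k, τ k ≤ 1)
    {s : ℕ} (hs : 1 ≤ s) (hpre : ∀ k, 1 ≤ k → k < s → μ k = τ k) (hlt : μ s < τ s) :
    (∑' k : ℕ, (μ (k + 1) : ℝ) * ω ^ (k + 1)) <
      ∑' k : ℕ, (τ (k + 1) : ℝ) * ω ^ (k + 1) := by
  obtain ⟨t, rfl⟩ : ∃ t, s = t + 1 := ⟨s - 1, by omega⟩
  have hμs : μ (t + 1) = 0 := by have := hτ1 (t + 1); omega
  have hτs : τ (t + 1) = 1 := by have := hτ1 (t + 1); omega
  have hsummμ : Summable (fun k : ℕ => (μ (k + 1) : ℝ) * ω ^ (k + 1)) := by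
    have := zk_summable hω0 hω1 hsq hμ1 hμ2 0
    simpa using this
  have hsummτ : Summable (fun k : ℕ => (τ (k + 1) : ℝ) * ω ^ (k + 1)) := by
    apply Summable.of_nonneg_of_le (fun k => by positivity) (fun k => ?_)
      ((summable_geometric_of_lt_one hω0.le hω1).mul_left ω)
    calc (τ (k + 1) : ℝ) * ω ^ (k + 1) ≤ 1 * ω ^ (k + 1) := by
          apply mul_le_mul_of_nonneg_right _ (by positivity)
          exact_mod_cast hτ1 _
      _ = ω * ω ^ k := by rw [one_mul, pow_succ]; ring
  have hsplitμ := (Summable.sum_add_tsum_nat_add (t + 1) hsummμ).symm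
  have hsplitτ := (Summable.sum_add_tsum_nat_add (t + 1) hsummτ).symm
  rw [hsplitμ, hsplitτ]
  -- prefixes over range (t+1)
  rw [Finset.sum_range_succ, Finset.sum_range_succ]
  have hprefeq : ∑ i ∈ range t, (μ (i + 1) : ℝ) * ω ^ (i + 1)
      = ∑ i ∈ range t, (τ (i + 1) : ℝ) * ω ^ (i + 1) := by
    apply Finset.sum_congr rfl
    intro i hi
    rw [hpre (i + 1) (by omega) (by simpa using Finset.mem_range.mp hi)]
  -- strict bound on the μ tail
  have hdev : ∃ n, 1 ≤ n ∧ μ (t + 1 + n) ≠ (if n % 2 = 1 then 1 else 0) := by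
    have := hμ3 (t + 1)
    push_neg at this
    exact this
  obtain ⟨n, hn1, hn2⟩ := hdev
  have htailμ : ∑' k : ℕ, (μ (k + (t + 1) + 1) : ℝ) * ω ^ (k + (t + 1) + 1)
      < ω ^ (t + 1) :=
    zk_tsum_lt hω0 hω1 hsq hμ1 hμ2 n (t + 1) hn1 hn2
  have htailτ : (0 : ℝ) ≤ ∑' k : ℕ, (τ (k + (t + 1) + 1) : ℝ) * ω ^ (k + (t + 1) + 1) :=
    tsum_nonneg fun k => by positivity
  rw [hprefeq, hμs, hτs]
  push_cast
  linarith



/-- For Zeckendorf expressions `μ, τ` for `(0,1)`, the values satisfy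
`Σ μ(k)ω^k < Σ τ(k)ω^k` iff some prefix of `μ` is lexicographically less than
the corresponding prefix of `τ`. -/
theorem zeckendorf_unitInterval_order
    (φ ω : ℝ) (hφ : φ = (1 + Real.sqrt 5) / 2) (hω : ω = 1 / φ)
    (μ τ : ℕ → ℕ)
    (hμ1 : ∀ k, μ k ≤ 1) (hμ2 : ∀ k, 1 ≤ k → μ k * μ (k + 1) = 0)
    (hμ3 : ∀ j : ℕ, ¬ (∀ n, 1 ≤ n → μ (j + n) = if n % 2 = 1 then 1 else 0))
    (hτ1 : ∀ k, τ k ≤ 1) (hτ2 : ∀ k, 1 ≤ k → τ k * τ (k + 1) = 0)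
    (hτ3 : ∀ j : ℕ, ¬ (∀ n, 1 ≤ n → τ (j + n) = if n % 2 = 1 then 1 else 0)) :
    (∑' k : ℕ, (μ (k + 1) : ℝ) * ω ^ (k + 1)) <
      (∑' k : ℕ, (τ (k + 1) : ℝ) * ω ^ (k + 1)) ↔
    ∃ s, 1 ≤ s ∧ (∀ k, 1 ≤ k → k < s → μ k = τ k) ∧ μ s < τ s := by
  have h5 : Real.sqrt 5 ^ 2 = 5 := Real.sq_sqrt (by norm_num)
  have h5' : 2 ≤ Real.sqrt 5 := by nlinarith [Real.sqrt_nonneg 5]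
  have hφ1 : 1 < φ := by rw [hφ]; linarith
  have hω0 : 0 < ω := by rw [hω]; exact div_pos one_pos (by linarith)
  have hω1 : ω < 1 := by rw [hω, div_lt_one (by linarith)]; linarith
  have hφsq : φ ^ 2 = φ + 1 := by rw [hφ]; nlinarith [h5]
  have hsq : ω ^ 2 = 1 - ω := by
    rw [hω]
    field_simp
    nlinarith [hφsq]
  constructor
  · intro hAB
    by_contra hno
    push_neg at hno
    by_cases hall : ∀ k, 1 ≤ k → μ k = τ k
    · have heq : (∑' k : ℕ, (μ (k + 1) : ℝ) * ω ^ (k + 1))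
          = ∑' k : ℕ, (τ (k + 1) : ℝ) * ω ^ (k + 1) :=
        tsum_congr fun k => by rw [hall (k + 1) (by omega)]
      linarith
    · push_neg at hall
      have hex : ∃ k, 1 ≤ k ∧ μ k ≠ τ k := hall
      have hsp := Nat.find_spec hex
      set s := Nat.find hex with hsdef
      have hpre : ∀ k, 1 ≤ k → k < s → μ k = τ k := by
        intro k hk1 hks
        by_contra hne
        exact Nat.find_min hex hks ⟨hk1, hne⟩
      have hts : τ s < μ s :=
        lt_of_le_of_ne (hno s hsp.1 hpre) fun e => hsp.2 e.symm
      have := zk_key hω0 hω1 hsq hτ1 hτ2 hτ3 hμ1 hsp.1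
        (fun k a b => (hpre k a b).symm) hts
      linarith
  · rintro ⟨s, hs, hpre, hlt⟩
    exact zk_key hω0 hω1 hsq hμ1 hμ2 hμ3 hτ1 hs hpre hlt
end

section
/- Let g(x) = x^N - Σ_{k=1}^{N-1} a_k x^{N-k} - (1 + a_N), where N ≥ 2, a_1 > 0, and a_k ≥ 0 are integers. Then g has exactly one positive real zero ψ, this zero is simple, and every other complex zero z of g satisfies |z| < ψ. -/
/-!
Write `g(z) = z^N - Σ_{k=1}^N b_k z^(N-k)` with `b_k = a_k` for `k < N` and `b_N = 1 + a_N`.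
For `z ≠ 0`, `g(z) = z^N (1 - Q(1/z))` with `Q(u) = Σ_{k=1}^N b_k u^k`, whose coefficients are
nonnegative with `b_1 > 0`. So `Q` is strictly increasing on `[0, ∞)` and `Q(u) = 1` has a single
positive solution `u`, giving the unique positive zero `ψ = 1/u`. For any zero `z`,
`1 = |Q(1/z)| ≤ Q(|1/z|)`, hence `|1/z| ≥ u`; if `|1/z| = u` then `Re Q(1/z) = Q(|1/z|)`, which
forces `Re (1/z) = |1/z|` through the term `b_1 / z`, so `z = ψ`. Finally, at a zero,
`z g'(z) = Σ_k k b_k z^(N-k)`, which is positive at `ψ`.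
-/

open Complex Finset

section
variable {N : ℕ}

lemma mul_natCast_mul_pow_sub_one {R : Type*} [CommSemiring R] (m : ℕ) (z : R) :
    z * (m * z ^ (m - 1)) = m * z ^ m := by
  cases m with
  | zero => simp
  | succ m => simp only [Nat.add_sub_cancel, pow_succ]; ring

lemma pow_sub_sum_mul_pow_eq {K : Type*} [Field K] (c : ℕ → K) {z : K} (hz : z ≠ 0) :
    z ^ N - ∑ k ∈ Icc 1 N, c k * z ^ (N - k) =
      z ^ N * (1 - ∑ k ∈ Icc 1 N, c k * z⁻¹ ^ k) := by
  rw [mul_sub, mul_one, mul_sum]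
  congr 1
  refine sum_congr rfl fun k hk => ?_
  rw [pow_sub₀ z hz (mem_Icc.1 hk).2, inv_pow]
  ring

lemma pow_sub_sum_mul_pow_eq_zero_iff {K : Type*} [Field K] (c : ℕ → K) {z : K}
    (hz : z ≠ 0) :
    z ^ N - ∑ k ∈ Icc 1 N, c k * z ^ (N - k) = 0 ↔ ∑ k ∈ Icc 1 N, c k * z⁻¹ ^ k = 1 := by
  rw [pow_sub_sum_mul_pow_eq c hz, mul_eq_zero, sub_eq_zero, eq_comm (a := (1 : K))]
  simp [hz]

lemma hasDerivAt_pow_sub_sum_mul_pow {𝕜 : Type*} [NontriviallyNormedField 𝕜] (c : ℕ → 𝕜)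
    (z : 𝕜) :
    HasDerivAt (fun z => z ^ N - ∑ k ∈ Icc 1 N, c k * z ^ (N - k))
      (N * z ^ (N - 1) - ∑ k ∈ Icc 1 N, c k * ((N - k : ℕ) * z ^ (N - k - 1))) z :=
  (hasDerivAt_pow N z).sub <|
    HasDerivAt.fun_sum fun k _ => (hasDerivAt_pow (N - k) z).const_mul (c k)

lemma mul_deriv_pow_sub_sum_mul_pow_of_root {R : Type*} [CommRing R] (c : ℕ → R) {z : R}
    (hz : z ^ N = ∑ k ∈ Icc 1 N, c k * z ^ (N - k)) :
    z * (N * z ^ (N - 1) - ∑ k ∈ Icc 1 N, c k * ((N - k : ℕ) * z ^ (N - k - 1))) =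
      ∑ k ∈ Icc 1 N, c k * (k * z ^ (N - k)) := by
  rw [mul_sub, mul_sum, mul_natCast_mul_pow_sub_one, hz, mul_sum, ← sum_sub_distrib]
  refine sum_congr rfl fun k hk => ?_
  rw [mul_left_comm z, mul_natCast_mul_pow_sub_one, Nat.cast_sub (mem_Icc.1 hk).2]
  ring

variable {b : ℕ → ℝ}

lemma strictMonoOn_sum_mul_pow (hN : 1 ≤ N) (hb : ∀ k, 0 ≤ b k) (hb1 : 0 < b 1) :
    StrictMonoOn (fun u : ℝ => ∑ k ∈ Icc 1 N, b k * u ^ k) (Set.Ici 0) := by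
  intro x hx y _ hxy
  refine sum_lt_sum (fun k _ => ?_) ⟨1, mem_Icc.2 ⟨le_rfl, hN⟩, ?_⟩
  · exact mul_le_mul_of_nonneg_left (pow_le_pow_left₀ hx hxy.le k) (hb k)
  · simpa using mul_lt_mul_of_pos_left hxy hb1

lemma exists_sum_mul_pow_eq_one (hN : 1 ≤ N) (hb : ∀ k, 0 ≤ b k) (hb1 : 0 < b 1) :
    ∃ u : ℝ, 0 < u ∧ ∑ k ∈ Icc 1 N, b k * u ^ k = 1 := by
  set Q := fun u : ℝ => ∑ k ∈ Icc 1 N, b k * u ^ k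
  have hQ0 : Q 0 = 0 := sum_eq_zero fun k hk => by
    simp [Nat.one_le_iff_ne_zero.1 (mem_Icc.1 hk).1]
  have hQ1 : 1 ≤ Q (b 1)⁻¹ := by
    calc (1 : ℝ) = b 1 * (b 1)⁻¹ ^ 1 := by rw [pow_one, mul_inv_cancel₀ hb1.ne']
      _ ≤ Q (b 1)⁻¹ :=
        single_le_sum (f := fun k => b k * (b 1)⁻¹ ^ k)
          (fun k _ => mul_nonneg (hb k) (by positivity)) (mem_Icc.2 ⟨le_rfl, hN⟩)
  obtain ⟨u, hu, hQu⟩ := intermediate_value_Icc (inv_pos.2 hb1).le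
    (by fun_prop : Continuous Q).continuousOn ⟨hQ0.trans_le zero_le_one, hQ1⟩
  refine ⟨u, hu.1.lt_of_ne ?_, hQu⟩
  rintro rfl
  exact zero_ne_one (hQ0.symm.trans hQu)

lemma norm_sum_mul_pow_le (hb : ∀ k, 0 ≤ b k) (s : Finset ℕ) (w : ℂ) :
    ‖∑ k ∈ s, (b k : ℂ) * w ^ k‖ ≤ ∑ k ∈ s, b k * ‖w‖ ^ k :=
  (norm_sum_le _ _).trans_eq <| sum_congr rfl fun k _ => by
    rw [norm_mul, norm_pow, norm_real, Real.norm_of_nonneg (hb k)]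

lemma eq_norm_of_sum_mul_pow_le_re (hN : 1 ≤ N) (hb : ∀ k, 0 ≤ b k) (hb1 : 0 < b 1) {w : ℂ}
    (h : ∑ k ∈ Icc 1 N, b k * ‖w‖ ^ k ≤ (∑ k ∈ Icc 1 N, (b k : ℂ) * w ^ k).re) : w = ‖w‖ := by
  have hterm : ∀ k ∈ Icc 1 N, b k * (w ^ k).re ≤ b k * ‖w‖ ^ k := fun k _ =>
    mul_le_mul_of_nonneg_left ((re_le_norm _).trans_eq (norm_pow _ _)) (hb k)
  rw [re_sum] at h
  simp only [re_ofReal_mul] at h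
  have h1 := (sum_eq_sum_iff_of_le hterm).1 (le_antisymm (sum_le_sum hterm) h) 1
    (mem_Icc.2 ⟨le_rfl, hN⟩)
  rw [pow_one, pow_one] at h1
  exact eq_coe_norm_of_nonneg (re_eq_norm.1 (mul_left_cancel₀ hb1.ne' h1))

lemma deriv_pow_sub_sum_mul_pow_ne_zero (hN : 1 ≤ N) (hb : ∀ k, 0 ≤ b k) (hb1 : 0 < b 1)
    {ψ : ℝ} (hψ : 0 < ψ)
    (hroot : (ψ : ℂ) ^ N - ∑ k ∈ Icc 1 N, (b k : ℂ) * (ψ : ℂ) ^ (N - k) = 0) :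
    deriv (fun z : ℂ => z ^ N - ∑ k ∈ Icc 1 N, (b k : ℂ) * z ^ (N - k)) ψ ≠ 0 := by
  rw [(hasDerivAt_pow_sub_sum_mul_pow _ _).deriv]
  intro h0
  have hpos : 0 < ∑ k ∈ Icc 1 N, b k * (k * ψ ^ (N - k)) :=
    sum_pos' (fun k _ => mul_nonneg (hb k) (by positivity))
      ⟨1, mem_Icc.2 ⟨le_rfl, hN⟩, mul_pos hb1 (by simp [hψ])⟩
  have h := mul_deriv_pow_sub_sum_mul_pow_of_root _ (sub_eq_zero.1 hroot)
  rw [h0, mul_zero] at h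
  exact hpos.ne' (by exact_mod_cast h.symm)

theorem exists_dominant_root_pow_sub_sum_mul_pow (hN : 1 ≤ N) (hb : ∀ k, 0 ≤ b k)
    (hb1 : 0 < b 1) (g : ℂ → ℂ)
    (hg : ∀ z : ℂ, g z = z ^ N - ∑ k ∈ Icc 1 N, (b k : ℂ) * z ^ (N - k)) :
    ∃ ψ : ℝ, 0 < ψ ∧ g ψ = 0 ∧
      (∀ x : ℝ, 0 < x → g x = 0 → x = ψ) ∧
      deriv g ψ ≠ 0 ∧
      (∀ z : ℂ, g z = 0 → z ≠ (ψ : ℂ) → ‖z‖ < ψ) := by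
  obtain ⟨u, hu, hQu⟩ := exists_sum_mul_pow_eq_one hN hb hb1
  have hmono := strictMonoOn_sum_mul_pow hN hb hb1
  have root_iff : ∀ z ≠ 0, g z = 0 ↔ ∑ k ∈ Icc 1 N, (b k : ℂ) * z⁻¹ ^ k = 1 := fun z hz => by
    rw [hg]; exact pow_sub_sum_mul_pow_eq_zero_iff _ hz
  have hQ_ofReal : ∀ x : ℝ, ∑ k ∈ Icc 1 N, (b k : ℂ) * (x : ℂ) ^ k =
      ((∑ k ∈ Icc 1 N, b k * x ^ k : ℝ) : ℂ) := fun x => by push_cast; rfl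
  have hψ : g (u⁻¹ : ℝ) = 0 := (root_iff _ (by simp [hu.ne'])).2 <| by
    rw [← ofReal_inv, inv_inv, hQ_ofReal, hQu, ofReal_one]
  refine ⟨u⁻¹, inv_pos.2 hu, hψ, fun x hx hgx => ?_, ?_, fun z hz hzψ => ?_⟩
  · have hx' := (root_iff x (ofReal_ne_zero.2 hx.ne')).1 hgx
    rw [← ofReal_inv, hQ_ofReal, ← ofReal_one, ofReal_inj, ← hQu] at hx'
    rw [← hmono.injOn (inv_pos.2 hx).le hu.le hx', inv_inv]
  · rw [show g = _ from funext hg] at hψ ⊢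
    exact deriv_pow_sub_sum_mul_pow_ne_zero hN hb hb1 (inv_pos.2 hu) hψ
  · rcases eq_or_ne z 0 with rfl | hz0
    · simpa using hu
    have hQz := (root_iff z hz0).1 hz
    have h1 : 1 ≤ ∑ k ∈ Icc 1 N, b k * ‖z⁻¹‖ ^ k := by
      simpa only [hQz, norm_one] using norm_sum_mul_pow_le hb (Icc 1 N) z⁻¹
    have hule : u ≤ ‖z⁻¹‖ := (hmono.le_iff_le hu.le (norm_nonneg _)).1 (hQu.trans_le h1)
    rcases hule.lt_or_eq with hlt | heq
    · rw [norm_inv] at hlt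
      exact (lt_inv_comm₀ hu (norm_pos_iff.2 hz0)).1 hlt
    · refine absurd ?_ hzψ
      have hz' : z⁻¹ = ‖z⁻¹‖ := eq_norm_of_sum_mul_pow_le_re hN hb hb1 (by
        rw [hQz, ← heq, hQu, one_re])
      rw [← heq] at hz'
      rw [ofReal_inv, ← hz', inv_inv]

end

/-- The polynomial `g(x) = x^N - Σ_{k=1}^{N-1} a_k x^{N-k} - (1+a_N)` has a
unique positive real zero `ψ`; this zero is simple, and every other complex
zero has absolute value `< ψ`. -/
theorem dominant_zero
    (N : ℕ) (hN : 2 ≤ N)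
    (a : ℕ → ℕ) (ha1 : 0 < a 1)
    (g : ℂ → ℂ)
    (hg : ∀ z : ℂ, g z =
      z ^ N - (∑ k ∈ Finset.Icc 1 (N - 1), (a k : ℂ) * z ^ (N - k)) - (1 + a N)) :
    ∃ ψ : ℝ, 0 < ψ ∧ g ψ = 0 ∧
      (∀ x : ℝ, 0 < x → g x = 0 → x = ψ) ∧
      deriv g ψ ≠ 0 ∧
      (∀ z : ℂ, g z = 0 → z ≠ (ψ : ℂ) → ‖z‖ < ψ) := by
  set b : ℕ → ℝ := Function.update (fun k => (a k : ℝ)) N (1 + a N)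
  have hb : ∀ k, 0 ≤ b k := fun k => by
    rcases eq_or_ne k N with rfl | hk
    · simp only [b, Function.update_self]; positivity
    · simp only [b, Function.update_of_ne hk]; positivity
  have hb1 : 0 < b 1 := by
    simpa [b, Function.update_of_ne (show 1 ≠ N by omega)] using ha1
  refine exists_dominant_root_pow_sub_sum_mul_pow (by omega : 1 ≤ N) hb hb1 g fun z => ?_
  obtain ⟨M, rfl⟩ : ∃ M, N = M + 1 := ⟨N - 1, by omega⟩
  rw [hg, sum_Icc_succ_top (by omega), Nat.add_sub_cancel]
  have hlow : ∑ k ∈ Icc 1 M, (b k : ℂ) * z ^ (M + 1 - k) =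
      ∑ k ∈ Icc 1 M, (a k : ℂ) * z ^ (M + 1 - k) :=
    sum_congr rfl fun k hk => by
      simp [b, Function.update_of_ne (show k ≠ M + 1 by grind)]
  rw [hlow]
  simp only [b, Function.update_self, ofReal_add, ofReal_one, ofReal_natCast, tsub_self, pow_zero,
    mul_one]
  ring
end

section
/- Let a_1,...,a_N be nonnegative integers with a_1 > 0, and let H be the sequence defined by H_n = 1 + Σ_{k=1}^{n-1} a_k H_{n-k} for 1 ≤ n ≤ N+1 and H_{n+N} = a_1 H_{n+N-1} + ... + a_{N-1} H_{n+1} + (1+a_N) H_n for all n ≥ 1. Let ψ be the unique positive real zero of g(x) = x^N - Σ_{k=1}^{N-1} a_k x^{N-k} - (1+a_N). Then there exist real constants δ > 0 and 0 < r < 1 such that H_n = δ·ψ^n + O(ψ^{rn}). -/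
/-!
Write the recurrence as `H (n + N) = ∑ c k * H (n + N - k)`, with `c k = a k` for `k < N` and
`c N = 1 + a N`. Dividing by `ψ ^ n` turns it into an averaging recurrence
`y n = ∑ v k * y (n - k)`: the weights `v k = c k / ψ ^ k` sum to `1` by the characteristic
equation. For such a recurrence the maximum over a block of `N` consecutive terms can only
decrease and the minimum only increase, and since `v 1 > 0` the smallest value of one block pulls
every value two blocks later down by the fraction `v 1 ^ (2N)` of the oscillation. Hence the
oscillation contracts geometrically, `y` converges geometrically to some `δ` at least the
(positive) minimum of its first block, and multiplying back by `ψ ^ n` turns the error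
`ψ ^ n s ^ n` with `s < 1` into `O(ψ ^ (r n))` with `r < 1`.
-/

open Finset

noncomputable def blockMax (N : ℕ) (y : ℕ → ℝ) (i : ℕ) : ℝ := ⨆ j : Fin N, y (i * N + j)

noncomputable def blockMin (N : ℕ) (y : ℕ → ℝ) (i : ℕ) : ℝ := ⨅ j : Fin N, y (i * N + j)

section Blocks

variable {N i n : ℕ} {y : ℕ → ℝ} {c : ℝ}

theorem apply_le_blockMax (h₁ : i * N ≤ n) (h₂ : n < i * N + N) : y n ≤ blockMax N y i := by
  simpa [blockMax, Nat.add_sub_cancel' h₁] using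
    le_ciSup (Set.finite_range fun j : Fin N => y (i * N + j)).bddAbove ⟨n - i * N, by omega⟩

theorem blockMin_le_apply (h₁ : i * N ≤ n) (h₂ : n < i * N + N) : blockMin N y i ≤ y n := by
  simpa [blockMin, Nat.add_sub_cancel' h₁] using
    ciInf_le (Set.finite_range fun j : Fin N => y (i * N + j)).bddBelow ⟨n - i * N, by omega⟩

theorem blockMax_le (hN : 0 < N) (h : ∀ n, i * N ≤ n → n < i * N + N → y n ≤ c) :
    blockMax N y i ≤ c :=
  have : NeZero N := ⟨hN.ne'⟩
  ciSup_le fun j => h _ (by omega) (by omega)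

theorem le_blockMin (hN : 0 < N) (h : ∀ n, i * N ≤ n → n < i * N + N → c ≤ y n) :
    c ≤ blockMin N y i :=
  have : NeZero N := ⟨hN.ne'⟩
  le_ciInf fun j => h _ (by omega) (by omega)

theorem exists_eq_blockMin (hN : 0 < N) :
    ∃ n, i * N ≤ n ∧ n < i * N + N ∧ y n = blockMin N y i := by
  have : NeZero N := ⟨hN.ne'⟩
  obtain ⟨j, hj⟩ := exists_eq_ciInf_of_finite (f := fun j : Fin N => y (i * N + j))
  exact ⟨i * N + j, by omega, by omega, hj⟩

theorem lt_blockMin (hN : 0 < N) (h : ∀ n, i * N ≤ n → n < i * N + N → c < y n) :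
    c < blockMin N y i := by
  obtain ⟨n, hn₁, hn₂, hn⟩ := exists_eq_blockMin (y := y) (i := i) hN
  exact hn ▸ h n hn₁ hn₂

theorem blockMin_le_blockMax (hN : 0 < N) : blockMin N y i ≤ blockMax N y i :=
  (blockMin_le_apply le_rfl (by omega)).trans (apply_le_blockMax le_rfl (by omega))

end Blocks

theorem exists_pow_bound_of_le_pow_div {f : ℕ → ℝ} {B q : ℝ} {m : ℕ} (hm : 0 < m) (hq₀ : 0 ≤ q)
    (hq₁ : q < 1) (hB : 0 ≤ B) (hf : ∀ n, f n ≤ B * q ^ (n / m)) :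
    ∃ C s : ℝ, 0 < s ∧ s < 1 ∧ ∀ n, f n ≤ C * s ^ n := by
  -- raising `q` keeps `s` positive when `q = 0`
  set q' := max q 2⁻¹
  have hq'₀ : 0 < q' := lt_max_of_lt_right (by norm_num)
  have hq'₁ : q' < 1 := max_lt hq₁ (by norm_num)
  set s := q' ^ (m⁻¹ : ℝ)
  have hs₀ : 0 < s := Real.rpow_pos_of_pos hq'₀ _
  have hs₁ : s < 1 := Real.rpow_lt_one hq'₀.le hq'₁ (by positivity)
  have hsm : s ^ m = q' := Real.rpow_inv_natCast_pow hq'₀.le hm.ne'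
  refine ⟨B / q', s, hs₀, hs₁, fun n => ?_⟩
  have hpow : q' ^ (n / m) * q' ≤ s ^ n := by
    rw [← hsm, ← pow_mul, ← pow_add, ← mul_add_one]
    exact pow_le_pow_of_le_one hs₀.le hs₁.le (Nat.lt_mul_div_succ n hm).le
  calc f n ≤ B * q ^ (n / m) := hf n
    _ ≤ B * q' ^ (n / m) := by gcongr; exact le_max_left _ _
    _ ≤ B / q' * s ^ n := by
      rw [div_mul_eq_mul_div, le_div_iff₀ hq'₀, mul_assoc]
      gcongr

theorem exists_pow_le_rpow {ψ s : ℝ} (hψ : 1 < ψ) (hs₀ : 0 < s) (hs₁ : s < 1) :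
    ∃ r : ℝ, 0 < r ∧ r < 1 ∧ ∀ n : ℕ, (ψ * s) ^ n ≤ ψ ^ (r * n) := by
  have hlog := Real.logb_neg hψ hs₀ hs₁
  refine ⟨max 2⁻¹ (1 + Real.logb ψ s), lt_max_of_lt_left (by norm_num),
    max_lt (by norm_num) (by linarith), fun n => ?_⟩
  have hψs : ψ * s = ψ ^ (1 + Real.logb ψ s) := by
    rw [Real.rpow_add (by linarith), Real.rpow_one, Real.rpow_logb (by linarith) hψ.ne' hs₀]
  rw [hψs, ← Real.rpow_mul_natCast (by linarith)]
  exact Real.rpow_le_rpow_of_exponent_le hψ.le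
    (mul_le_mul_of_nonneg_right (le_max_right _ _) n.cast_nonneg)

structure IsAveragingRecurrence (N : ℕ) (v y : ℕ → ℝ) : Prop where
  weight_nonneg : ∀ k, 0 ≤ v k
  sum_weight : ∑ k ∈ Icc 1 N, v k = 1
  eq_sum : ∀ n, N ≤ n → y n = ∑ k ∈ Icc 1 N, v k * y (n - k)

namespace IsAveragingRecurrence

variable {N i j n p : ℕ} {v y : ℕ → ℝ} {c M : ℝ}

theorem pos (h : IsAveragingRecurrence N v y) : 0 < N := by
  by_contra hN
  simpa [Nat.eq_zero_of_not_pos hN] using h.sum_weight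

theorem weight_one_le_one (h : IsAveragingRecurrence N v y) : v 1 ≤ 1 :=
  h.sum_weight ▸ single_le_sum (fun j _ => h.weight_nonneg j) (mem_Icc.2 ⟨le_rfl, h.pos⟩)

theorem neg (h : IsAveragingRecurrence N v y) : IsAveragingRecurrence N v (-y) :=
  ⟨h.weight_nonneg, h.sum_weight, fun n hn => by simp [h.eq_sum n hn]⟩

theorem le_apply_of_le_window (h : IsAveragingRecurrence N v y)
    (hc : ∀ m, p ≤ m → m < p + N → c ≤ y m) : ∀ n, p ≤ n → c ≤ y n := by
  intro n
  induction n using Nat.strong_induction_on with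
  | _ n ih =>
    intro hpn
    by_cases hn : n < p + N
    · exact hc n hpn hn
    calc c = ∑ k ∈ Icc 1 N, v k * c := by rw [← sum_mul, h.sum_weight, one_mul]
      _ ≤ ∑ k ∈ Icc 1 N, v k * y (n - k) := by
        refine sum_le_sum fun k hk => mul_le_mul_of_nonneg_left ?_ (h.weight_nonneg k)
        have := mem_Icc.1 hk
        exact ih _ (by omega) (by omega)
      _ = y n := (h.eq_sum n (by omega)).symm

theorem apply_le_of_window_le (h : IsAveragingRecurrence N v y)
    (hc : ∀ m, p ≤ m → m < p + N → y m ≤ c) : ∀ n, p ≤ n → y n ≤ c := fun n hn =>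
  neg_le_neg_iff.1 <|
    h.neg.le_apply_of_le_window (c := -c) (fun m h₁ h₂ => neg_le_neg (hc m h₁ h₂)) n hn

theorem apply_le_blockMax_of_le (h : IsAveragingRecurrence N v y) (hn : i * N ≤ n) :
    y n ≤ blockMax N y i :=
  h.apply_le_of_window_le (fun _ h₁ h₂ => apply_le_blockMax h₁ h₂) n hn

theorem blockMin_le_apply_of_le (h : IsAveragingRecurrence N v y) (hn : i * N ≤ n) :
    blockMin N y i ≤ y n :=
  h.le_apply_of_le_window (fun _ h₁ h₂ => blockMin_le_apply h₁ h₂) n hn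

theorem blockMax_antitone (h : IsAveragingRecurrence N v y) : Antitone (blockMax N y) :=
  fun _ _ hij => blockMax_le h.pos fun _ hn _ =>
    h.apply_le_blockMax_of_le ((Nat.mul_le_mul_right N hij).trans hn)

theorem blockMin_monotone (h : IsAveragingRecurrence N v y) : Monotone (blockMin N y) :=
  fun _ _ hij => le_blockMin h.pos fun _ hn _ =>
    h.blockMin_le_apply_of_le ((Nat.mul_le_mul_right N hij).trans hn)

/-- `M - y (n + 1) = ∑ v k * (M - y (n + 1 - k))`, and all terms are nonnegative. -/
theorem mul_sub_le_sub_apply_succ (h : IsAveragingRecurrence N v y)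
    (hM : ∀ m, p ≤ m → y m ≤ M) (hn : p + N ≤ n + 1) :
    v 1 * (M - y n) ≤ M - y (n + 1) := by
  have hslack : M - y (n + 1) = ∑ k ∈ Icc 1 N, v k * (M - y (n + 1 - k)) := by
    rw [h.eq_sum (n + 1) (by omega)]
    simp only [mul_sub, sum_sub_distrib, ← sum_mul, h.sum_weight, one_mul]
  rw [hslack]
  simpa using single_le_sum (f := fun k => v k * (M - y (n + 1 - k)))
    (fun k hk => mul_nonneg (h.weight_nonneg k)
      (sub_nonneg.2 (hM _ (by have := mem_Icc.1 hk; omega))))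
    (mem_Icc.2 ⟨le_rfl, h.pos⟩)

theorem pow_mul_sub_le_sub_apply_add (h : IsAveragingRecurrence N v y)
    (hM : ∀ m, p ≤ m → y m ≤ M) (hj : p + N ≤ j) (s : ℕ) :
    v 1 ^ s * (M - y j) ≤ M - y (j + s) := by
  induction s with
  | zero => simp
  | succ s ih =>
    calc v 1 ^ (s + 1) * (M - y j) = v 1 * (v 1 ^ s * (M - y j)) := by ring
      _ ≤ v 1 * (M - y (j + s)) := mul_le_mul_of_nonneg_left ih (h.weight_nonneg 1)
      _ ≤ M - y (j + s + 1) := h.mul_sub_le_sub_apply_succ hM (by omega)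

theorem blockMax_add_two_le (h : IsAveragingRecurrence N v y) (i : ℕ) :
    blockMax N y (i + 2) ≤
      blockMax N y i - v 1 ^ (2 * N) * (blockMax N y i - blockMin N y (i + 1)) := by
  obtain ⟨j, hj₁, hj₂, hj⟩ := exists_eq_blockMin (y := y) (i := i + 1) h.pos
  have hM : ∀ m, i * N ≤ m → y m ≤ blockMax N y i := fun m hm => h.apply_le_blockMax_of_le hm
  have e₁ : (i + 1) * N = i * N + N := by ring
  have e₂ : (i + 2) * N = i * N + 2 * N := by ring
  refine blockMax_le h.pos fun n hn₁ hn₂ => ?_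
  have hθ : v 1 ^ (2 * N) ≤ v 1 ^ (n - j) :=
    pow_le_pow_of_le_one (h.weight_nonneg 1) h.weight_one_le_one
      (by omega)
  have hgap : 0 ≤ blockMax N y i - y j := sub_nonneg.2 (hM j (by omega))
  have hdecay := h.pow_mul_sub_le_sub_apply_add hM (by omega : i * N + N ≤ j) (n - j)
  rw [Nat.add_sub_cancel' (by omega : j ≤ n)] at hdecay
  rw [← hj]
  linarith [mul_le_mul_of_nonneg_right hθ hgap]

theorem blockMax_sub_blockMin_add_two_le (h : IsAveragingRecurrence N v y) (i : ℕ) :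
    blockMax N y (i + 2) - blockMin N y (i + 2) ≤
      (1 - v 1 ^ (2 * N)) * (blockMax N y i - blockMin N y i) := by
  have hθ : v 1 ^ (2 * N) ≤ 1 :=
    pow_le_one₀ (h.weight_nonneg 1) h.weight_one_le_one
  have hL₁ := h.blockMin_monotone (Nat.le_succ i)
  have hL₂ := h.blockMin_monotone (Nat.le_succ (i + 1))
  linarith [h.blockMax_add_two_le i,
    mul_le_mul_of_nonneg_left (sub_le_sub_left hL₁ (blockMax N y i)) (sub_nonneg.2 hθ)]

theorem blockMax_sub_blockMin_le (h : IsAveragingRecurrence N v y) (i : ℕ) :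
    blockMax N y i - blockMin N y i ≤
      (blockMax N y 0 - blockMin N y 0) * (1 - v 1 ^ (2 * N)) ^ (i / 2) := by
  have hq : 0 ≤ 1 - v 1 ^ (2 * N) :=
    sub_nonneg.2 (pow_le_one₀ (h.weight_nonneg 1) h.weight_one_le_one)
  have heven : ∀ t, blockMax N y (2 * t) - blockMin N y (2 * t) ≤
      (blockMax N y 0 - blockMin N y 0) * (1 - v 1 ^ (2 * N)) ^ t := by
    intro t
    induction t with
    | zero => simp
    | succ t ih =>
      calc _ ≤ (1 - v 1 ^ (2 * N)) * (blockMax N y (2 * t) - blockMin N y (2 * t)) :=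
            h.blockMax_sub_blockMin_add_two_le (2 * t)
        _ ≤ (1 - v 1 ^ (2 * N)) * ((blockMax N y 0 - blockMin N y 0) * (1 - v 1 ^ (2 * N)) ^ t) :=
            mul_le_mul_of_nonneg_left ih hq
        _ = _ := by ring
  have hi : 2 * (i / 2) ≤ i := Nat.mul_div_le i 2
  linarith [heven (i / 2), h.blockMax_antitone hi, h.blockMin_monotone hi]

theorem exists_abs_sub_le_pow (h : IsAveragingRecurrence N v y) (hv : 0 < v 1) :
    ∃ δ, blockMin N y 0 ≤ δ ∧ ∃ C s : ℝ, 0 < s ∧ s < 1 ∧ ∀ n, |y n - δ| ≤ C * s ^ n := by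
  have hθ : v 1 ^ (2 * N) ≤ 1 :=
    pow_le_one₀ (h.weight_nonneg 1) h.weight_one_le_one
  have hbdd : BddAbove (Set.range (blockMin N y)) := ⟨blockMax N y 0, by
    rintro _ ⟨i, rfl⟩
    exact (blockMin_le_blockMax h.pos).trans (h.blockMax_antitone (Nat.zero_le i))⟩
  set δ := ⨆ i, blockMin N y i
  have hLδ : ∀ i, blockMin N y i ≤ δ := le_ciSup hbdd
  have hδM : ∀ i, δ ≤ blockMax N y i := fun i => ciSup_le fun j =>
    (h.blockMin_monotone (le_max_left j i)).trans
      ((blockMin_le_blockMax h.pos).trans (h.blockMax_antitone (le_max_right j i)))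
  refine ⟨δ, hLδ 0, exists_pow_bound_of_le_pow_div (Nat.mul_pos h.pos two_pos)
    (sub_nonneg.2 hθ) (by linarith [pow_pos hv (2 * N)])
    (sub_nonneg.2 (blockMin_le_blockMax (y := y) (i := 0) h.pos)) fun n => ?_⟩
  have hn₁ : n / N * N ≤ n := Nat.div_mul_le_self n N
  have hn₂ : n < n / N * N + N := by
    have := Nat.div_add_mod' n N
    have := Nat.mod_lt n h.pos
    omega
  rw [← Nat.div_div_eq_div_mul]
  calc |y n - δ| ≤ blockMax N y (n / N) - blockMin N y (n / N) :=
        abs_sub_le_iff.2 ⟨by linarith [apply_le_blockMax hn₁ hn₂ (y := y), hLδ (n / N)],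
          by linarith [blockMin_le_apply hn₁ hn₂ (y := y), hδM (n / N)]⟩
    _ ≤ _ := h.blockMax_sub_blockMin_le (n / N)

end IsAveragingRecurrence

theorem isAveragingRecurrence_div_pow {N : ℕ} {c x : ℕ → ℝ} {ψ : ℝ} (hψ : 0 < ψ)
    (hc : ∀ k, 0 ≤ c k) (hchar : ∑ k ∈ Icc 1 N, c k * ψ ^ (N - k) = ψ ^ N)
    (hx : ∀ n, N ≤ n → x n = ∑ k ∈ Icc 1 N, c k * x (n - k)) :
    IsAveragingRecurrence N (fun k => c k / ψ ^ k) (fun n => x n / ψ ^ n) where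
  weight_nonneg k := div_nonneg (hc k) (pow_pos hψ k).le
  sum_weight := by
    have hscale : ∑ k ∈ Icc 1 N, c k / ψ ^ k = (∑ k ∈ Icc 1 N, c k * ψ ^ (N - k)) / ψ ^ N := by
      rw [sum_div]
      refine sum_congr rfl fun k hk => ?_
      rw [← pow_sub_mul_pow ψ (mem_Icc.1 hk).2, mul_comm (ψ ^ (N - k)),
        mul_div_mul_right _ _ (pow_pos hψ _).ne']
    rw [hscale, hchar, div_self (pow_pos hψ N).ne']
  eq_sum n hn := by
    rw [hx n hn, sum_div]
    refine sum_congr rfl fun k hk => ?_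
    rw [div_mul_div_comm, ← pow_add, Nat.add_sub_cancel' ((mem_Icc.1 hk).2.trans hn)]

theorem one_lt_of_sum_div_pow_eq_one {s : Finset ℕ} {c : ℕ → ℝ} {ψ : ℝ} (hψ : 0 < ψ)
    (hc : ∀ k, 0 ≤ c k) (hsum : ∑ k ∈ s, c k / ψ ^ k = 1) (hc₁ : 1 < ∑ k ∈ s, c k) : 1 < ψ := by
  by_contra! hψ₁
  have : ∑ k ∈ s, c k ≤ ∑ k ∈ s, c k / ψ ^ k :=
    sum_le_sum fun k _ => le_div_self (hc k) (pow_pos hψ k) (pow_le_one₀ hψ.le hψ₁)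
  linarith

noncomputable def recCoeff (a : ℕ → ℕ) (N k : ℕ) : ℝ := a k + if k = N then 1 else 0

section recCoeff

variable {a : ℕ → ℕ} {N : ℕ}

theorem recCoeff_nonneg (a : ℕ → ℕ) (N k : ℕ) : 0 ≤ recCoeff a N k := by
  unfold recCoeff
  split_ifs <;> positivity

theorem recCoeff_one_pos (hN : 2 ≤ N) (ha1 : 0 < a 1) : 0 < recCoeff a N 1 := by
  simpa [recCoeff, show 1 ≠ N by omega] using ha1

theorem one_lt_sum_recCoeff (hN : 1 ≤ N) (ha1 : 0 < a 1) : 1 < ∑ k ∈ Icc 1 N, recCoeff a N k := by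
  have ha : (1 : ℝ) ≤ a 1 := by exact_mod_cast ha1
  have hsum : (a 1 : ℝ) ≤ ∑ k ∈ Icc 1 N, (a k : ℝ) :=
    single_le_sum (f := fun k => (a k : ℝ)) (fun k _ => by positivity) (mem_Icc.2 ⟨le_rfl, hN⟩)
  simp only [recCoeff, sum_add_distrib, sum_ite_eq', mem_Icc, le_refl, hN, and_self, if_true]
  linarith

theorem sum_recCoeff_mul (hN : 1 ≤ N) (f : ℕ → ℝ) :
    ∑ k ∈ Icc 1 N, recCoeff a N k * f k = ∑ k ∈ Icc 1 (N - 1), a k * f k + (1 + a N) * f N := by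
  obtain ⟨M, rfl⟩ := Nat.exists_eq_add_of_le' hN
  simp [recCoeff, add_mul, sum_add_distrib, sum_Icc_succ_top]
  ring

theorem sum_recCoeff_mul_pow {ψ : ℝ} (hN : 1 ≤ N)
    (hψ : ψ ^ N = (∑ k ∈ Icc 1 (N - 1), (a k : ℝ) * ψ ^ (N - k)) + (1 + a N)) :
    ∑ k ∈ Icc 1 N, recCoeff a N k * ψ ^ (N - k) = ψ ^ N := by
  rw [sum_recCoeff_mul hN, hψ]
  simp

theorem natCast_succ_eq_sum_recCoeff_mul {H : ℕ → ℕ} (hN : 1 ≤ N)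
    (hHrec : ∀ n, 1 ≤ n → H (n + N) = (∑ k ∈ Icc 1 (N - 1), a k * H (n + N - k)) + (1 + a N) * H n)
    (n : ℕ) (hn : N ≤ n) : (H (n + 1) : ℝ) = ∑ k ∈ Icc 1 N, recCoeff a N k * H (n - k + 1) := by
  obtain ⟨m, rfl⟩ := Nat.exists_eq_add_of_le' hn
  have hH := congrArg (Nat.cast : ℕ → ℝ) (hHrec (m + 1) (by omega))
  push_cast at hH
  rw [sum_recCoeff_mul hN, Nat.add_sub_cancel, show m + N + 1 = m + 1 + N by omega, hH]
  congr 1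
  refine sum_congr rfl fun k hk => ?_
  rw [show m + 1 + N - k = m + N - k + 1 by have := mem_Icc.1 hk; omega]

end recCoeff

/-- The fundamental sequence of a periodic Zeckendorf collection satisfies
`H_n = δ ψ^n + O(ψ^{rn})` for some `δ > 0` and `0 < r < 1`, where `ψ` is the
dominant positive real zero of the characteristic polynomial. -/
theorem fundamental_sequence_asymptotics
    (N : ℕ) (hN : 2 ≤ N)
    (a : ℕ → ℕ) (ha1 : 0 < a 1)
    (H : ℕ → ℕ)
    (hHinit : ∀ n, 1 ≤ n → n ≤ N + 1 →
      H n = 1 + ∑ k ∈ Finset.Icc 1 (n - 1), a k * H (n - k))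
    (hHrec : ∀ n, 1 ≤ n →
      H (n + N) = (∑ k ∈ Finset.Icc 1 (N - 1), a k * H (n + N - k)) + (1 + a N) * H n)
    (ψ : ℝ) (hψpos : 0 < ψ)
    (hψ : ψ ^ N = (∑ k ∈ Finset.Icc 1 (N - 1), (a k : ℝ) * ψ ^ (N - k)) + (1 + a N)) :
    ∃ δ : ℝ, 0 < δ ∧ ∃ r : ℝ, 0 < r ∧ r < 1 ∧ ∃ C : ℝ,
      ∀ n : ℕ, 1 ≤ n → |(H n : ℝ) - δ * ψ ^ n| ≤ C * ψ ^ (r * n) := by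
  have hN₁ : 1 ≤ N := by omega
  -- shifted by one, since the recurrence for `H` only starts at index `N + 1`
  set y : ℕ → ℝ := fun n => (H (n + 1) : ℝ) / ψ ^ n
  have hy : IsAveragingRecurrence N (fun k => recCoeff a N k / ψ ^ k) y :=
    isAveragingRecurrence_div_pow hψpos (recCoeff_nonneg a N) (sum_recCoeff_mul_pow hN₁ hψ)
      (natCast_succ_eq_sum_recCoeff_mul hN₁ hHrec)
  have hψ₁ : 1 < ψ := one_lt_of_sum_div_pow_eq_one hψpos (recCoeff_nonneg a N) hy.sum_weight
    (one_lt_sum_recCoeff hN₁ ha1)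
  obtain ⟨δ, hδ, C, s, hs₀, hs₁, hC⟩ :=
    hy.exists_abs_sub_le_pow (div_pos (recCoeff_one_pos hN ha1) (pow_pos hψpos 1))
  obtain ⟨r, hr₀, hr₁, hr⟩ := exists_pow_le_rpow hψ₁ hs₀ hs₁
  have hy₀ : 0 < blockMin N y 0 := lt_blockMin hy.pos fun n _ hn => by
    have := hHinit (n + 1) (by omega) (by omega)
    exact div_pos (by exact_mod_cast (show 0 < H (n + 1) by omega)) (pow_pos hψpos n)
  have hC₀ : 0 ≤ C := by simpa using (abs_nonneg _).trans (hC 0)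
  refine ⟨δ / ψ, div_pos (hy₀.trans_le hδ) hψpos, r, hr₀, hr₁, C, fun n hn => ?_⟩
  obtain ⟨m, rfl⟩ := Nat.exists_eq_add_of_le' hn
  calc |(H (m + 1) : ℝ) - δ / ψ * ψ ^ (m + 1)| = ψ ^ m * |y m - δ| := by
        rw [← abs_of_pos (pow_pos hψpos m), ← abs_mul]
        congr 1
        simp only [y]
        field_simp
        ring
    _ ≤ ψ ^ m * (C * s ^ m) := by gcongr; exact hC m
    _ = C * (ψ * s) ^ m := by ring
    _ ≤ C * ψ ^ (r * m) := mul_le_mul_of_nonneg_left (hr m) hC₀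
    _ ≤ C * ψ ^ (r * ↑(m + 1)) :=
        mul_le_mul_of_nonneg_left (Real.rpow_le_rpow_of_exponent_le hψ₁.le (by gcongr; omega)) hC₀
end
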